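/- arXiv:2407.18122 — 5 statements merged into one kernel-verified Lean document; each statement's English description precedes it below -/
import Mathlib

section
/- Let n ≥ 1 and set L = ⌊log₂ n⌋ + 1 (so 2^{L−1} ≤ n < 2^L). Let T be the set of binary cyclic sequences s of length 2^L satisfying (E + 1)^{n+1} s = 0 and (E + 1)^n s ≠ 0. Then: every s ∈ T has linear complexity n + 1 and least period exactly 2^L (no positive p < 2^L satisfies s(i + p) = s(i) for all i); T has exactly 2^n elements, which fall into exactly 2^{n − ⌊log₂ n⌋ − 1} equivalence classes under cyclic shift, each class of size 2^L; and for every n-tuple x : Fin n → ZMod 2 there is exactly one s ∈ T with s(i) = x(i) for all 0 ≤ i < n (indices taken in ZMod 2^L), so each n-tuple is contained exactly once as a window among these sequences. -/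
/-- The operator `E + 1` on binary cyclic sequences of length `N`:
`((E + 1) s)(i) = s(i + 1) + s(i)`. -/
def dOp {N : ℕ} (s : ZMod N → ZMod 2) : ZMod N → ZMod 2 :=
  fun i => s (i + 1) + s i

/-- The linear complexity of a binary cyclic sequence: the least `c ≥ 0` with
`(E + 1)^c s = 0`. -/
noncomputable def linComp {N : ℕ} (s : ZMod N → ZMod 2) : ℕ :=
  sInf {c : ℕ | dOp^[c] s = 0}

/-!
Over `ZMod 2`, `(E + 1)^(2^k) = E^(2^k) + 1`, so `(E + 1)^(2^L)` kills every sequence of length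
`2^L`. The map `s ↦ ((E + 1) s, s 0)` embeds `ker (E + 1)^(c+1)` into `ker (E + 1)^c × ZMod 2`,
and an element of `ker (E + 1)^c` is determined by its first `c` terms; comparing with
`ker (E + 1)^(2^L) = everything` forces `|ker (E + 1)^c| = 2^c` for `c ≤ 2^L`. A sequence of
linear complexity exactly `n + 1` has `(E + 1)^n s = 1`, so such sequences are determined by their
first `n` terms, and there are `2^(n+1) - 2^n = 2^n` of them: the window map onto `n`-tuples is a
bijection. If `0 < p < 2^L` were a period, so would be `gcd(p, 2^L)`, which divides
`2^(L-1) ≤ n`; then `(E + 1)^n s = 0`. So the shift acts freely, every orbit has `2^L` elements,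
and there are `2^n / 2^L` orbits.
-/

open Function Set

section
variable {N : ℕ}

lemma dOp_zero : dOp (0 : ZMod N → ZMod 2) = 0 := by
  ext i; simp [dOp]

lemma dOp_one : dOp (1 : ZMod N → ZMod 2) = 0 := by
  ext i; simp only [dOp, Pi.one_apply, Pi.zero_apply]; decide

lemma dOp_sub (s t : ZMod N → ZMod 2) : dOp (s - t) = dOp s - dOp t := by
  ext i; simp only [dOp, Pi.sub_apply]; ring

lemma iterate_dOp_sub (c : ℕ) (s t : ZMod N → ZMod 2) :
    dOp^[c] (s - t) = dOp^[c] s - dOp^[c] t := by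
  induction c generalizing s t with
  | zero => rfl
  | succ c ih => simp only [iterate_succ_apply, dOp_sub, ih]

lemma iterate_dOp_eq_zero_of_le {c d : ℕ} (hcd : c ≤ d) {s : ZMod N → ZMod 2}
    (hs : dOp^[c] s = 0) : dOp^[d] s = 0 := by
  obtain ⟨e, rfl⟩ := Nat.exists_eq_add_of_le hcd
  rw [add_comm, iterate_add_apply, hs, iterate_fixed dOp_zero]

lemma linComp_eq_succ_iff {s : ZMod N → ZMod 2} {c : ℕ} :
    linComp s = c + 1 ↔ dOp^[c + 1] s = 0 ∧ dOp^[c] s ≠ 0 :=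
  Nat.sInf_upward_closed_eq_succ_iff (fun _ _ hcd hs => iterate_dOp_eq_zero_of_le hcd hs) c

lemma iterate_dOp_two_pow (k : ℕ) (s : ZMod N → ZMod 2) (i : ZMod N) :
    dOp^[2 ^ k] s i = s (i + 2 ^ k) + s i := by
  induction k generalizing s i with
  | zero => simp [dOp]
  | succ k ih =>
    rw [pow_succ, mul_two, iterate_add_apply, ih, ih, ih, pow_succ, mul_two, ← add_assoc i]
    grind

lemma iterate_dOp_two_pow_eq_zero_iff {k : ℕ} {s : ZMod N → ZMod 2} :
    dOp^[2 ^ k] s = 0 ↔ ∀ i, s (i + 2 ^ k) = s i := by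
  simp only [funext_iff, iterate_dOp_two_pow, Pi.zero_apply, CharTwo.add_eq_zero]

lemma iterate_dOp_shift (c : ℕ) (j : ZMod N) (s : ZMod N → ZMod 2) :
    dOp^[c] (fun i => s (i + j)) = fun i => dOp^[c] s (i + j) := by
  induction c generalizing s with
  | zero => rfl
  | succ c ih =>
    rw [iterate_succ_apply, iterate_succ_apply, ← ih]
    congr 1
    ext i
    simp only [dOp, add_right_comm]

variable [NeZero N]

lemma eq_of_dOp_eq {s t : ZMod N → ZMod 2} (h : dOp s = dOp t) (h0 : s 0 = t 0) : s = t := by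
  have hnat : ∀ m : ℕ, s m = t m := by
    intro m
    induction m with
    | zero => simpa using h0
    | succ m ih =>
      have hm : s (m + 1) + s m = t (m + 1) + t m := congrFun h m
      rw [ih] at hm
      simpa using hm
  ext i
  simpa using hnat i.val

lemma eq_one_of_dOp_eq_zero {u : ZMod N → ZMod 2} (h : dOp u = 0) (hu : u ≠ 0) : u = 1 := by
  have hu0 : u 0 ≠ 0 := fun h0 => hu (eq_of_dOp_eq (h.trans dOp_zero.symm) h0)
  refine eq_of_dOp_eq (h.trans dOp_one.symm) ?_
  have h01 : ∀ a : ZMod 2, a ≠ 0 → a = 1 := by decide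
  exact h01 _ hu0

end

def kerPow (N c : ℕ) : Set (ZMod N → ZMod 2) := {s | dOp^[c] s = 0}

def window {N : ℕ} (c : ℕ) (s : ZMod N → ZMod 2) : Fin c → ZMod 2 := fun i => s (i : ℕ)

section
variable {N : ℕ}

lemma zero_mem_kerPow (c : ℕ) : (0 : ZMod N → ZMod 2) ∈ kerPow N c := iterate_fixed dOp_zero c

lemma dOp_mem_kerPow {c : ℕ} {s : ZMod N → ZMod 2} (hs : s ∈ kerPow N (c + 1)) :
    dOp s ∈ kerPow N c := by
  rwa [kerPow, mem_ofPred_eq, ← iterate_succ_apply]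

lemma window_dOp (c : ℕ) (s : ZMod N → ZMod 2) (i : Fin c) :
    window c (dOp s) i = window (c + 1) s i.succ + window (c + 1) s i.castSucc := by
  simp [window, dOp]

lemma kerPow_subset_kerPow_succ (c : ℕ) : kerPow N c ⊆ kerPow N (c + 1) :=
  fun _ hs => iterate_dOp_eq_zero_of_le c.le_succ hs

lemma existsUnique_window_eq {S : Set (ZMod N → ZMod 2)} {c : ℕ} (hinj : InjOn (window c) S)
    (hS : S.ncard = 2 ^ c) (x : Fin c → ZMod 2) : ∃! s, s ∈ S ∧ window c s = x := by
  have himage : window c '' S = univ := by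
    refine eq_of_subset_of_ncard_le (subset_univ _) ?_
    simp [hinj.ncard_image, hS]
  obtain ⟨s, hs, rfl⟩ := himage.symm ▸ mem_univ x
  exact ⟨s, ⟨hs, rfl⟩, fun t ⟨ht, hts⟩ => hinj ht hs hts⟩

variable [NeZero N]

lemma injOn_window_kerPow (c : ℕ) : InjOn (window c) (kerPow N c) := by
  induction c with
  | zero => intro s hs t ht _; exact hs.trans ht.symm
  | succ c ih =>
    intro s hs t ht hst
    have h0 : s 0 = t 0 := by simpa [window] using congrFun hst 0
    refine eq_of_dOp_eq (ih (dOp_mem_kerPow hs) (dOp_mem_kerPow ht) ?_) h0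
    ext i
    rw [window_dOp, window_dOp, hst]

lemma ncard_kerPow_le (c : ℕ) : (kerPow N c).ncard ≤ 2 ^ c := by
  calc (kerPow N c).ncard ≤ (univ : Set (Fin c → ZMod 2)).ncard :=
        ncard_le_ncard_of_injOn _ (fun _ _ => mem_univ _) (injOn_window_kerPow c)
    _ = 2 ^ c := by simp

lemma ncard_kerPow_succ_le (c : ℕ) : (kerPow N (c + 1)).ncard ≤ 2 * (kerPow N c).ncard := by
  let f : kerPow N (c + 1) → kerPow N c × ZMod 2 := fun s => (⟨dOp s, dOp_mem_kerPow s.2⟩, s.1 0)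
  have hf : Injective f := fun s t hst =>
    Subtype.ext (eq_of_dOp_eq (congrArg (·.1.1) hst) (congrArg Prod.snd hst))
  simpa [Nat.card_prod, mul_comm] using Nat.card_le_card_of_injective f hf

lemma ncard_kerPow_add_le (c d : ℕ) : (kerPow N (c + d)).ncard ≤ 2 ^ d * (kerPow N c).ncard := by
  induction d with
  | zero => simp
  | succ d ih =>
    calc (kerPow N (c + d + 1)).ncard ≤ 2 * (kerPow N (c + d)).ncard := ncard_kerPow_succ_le _
      _ ≤ 2 ^ (d + 1) * (kerPow N c).ncard := by
        rw [pow_succ', mul_assoc]; exact Nat.mul_le_mul_left 2 ih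

lemma injOn_window_sdiff_kerPow (c : ℕ) :
    InjOn (window c) (kerPow N (c + 1) \ kerPow N c) := by
  have hone : ∀ s ∈ kerPow N (c + 1) \ kerPow N c, dOp^[c] s = 1 := fun s hs =>
    eq_one_of_dOp_eq_zero (by rw [← iterate_succ_apply' dOp]; exact hs.1) hs.2
  intro s hs t ht hst
  have hsub : s - t ∈ kerPow N c := by
    simp only [kerPow, mem_ofPred_eq, iterate_dOp_sub, hone s hs, hone t ht, sub_self]
  have hwin : window c (s - t) = window c (0 : ZMod N → ZMod 2) := by
    ext i
    simpa [window, sub_eq_zero] using congrFun hst i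
  exact sub_eq_zero.1 (injOn_window_kerPow c hsub (zero_mem_kerPow c) hwin)

end

section
variable {L : ℕ}

lemma kerPow_two_pow_eq_univ : kerPow (2 ^ L) (2 ^ L) = univ := by
  have h : (2 : ZMod (2 ^ L)) ^ L = 0 := by exact_mod_cast ZMod.natCast_self (2 ^ L)
  ext s
  simp [kerPow, iterate_dOp_two_pow_eq_zero_iff, h]

lemma ncard_kerPow {c : ℕ} (hc : c ≤ 2 ^ L) : (kerPow (2 ^ L) c).ncard = 2 ^ c := by
  refine le_antisymm (ncard_kerPow_le c) ?_
  have h := ncard_kerPow_add_le (N := 2 ^ L) c (2 ^ L - c)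
  have hsplit : 2 ^ 2 ^ L = 2 ^ (2 ^ L - c) * 2 ^ c := by rw [← pow_add, Nat.sub_add_cancel hc]
  rw [Nat.add_sub_cancel' hc, kerPow_two_pow_eq_univ, ncard_univ, Nat.card_fun, Nat.card_zmod,
    Nat.card_zmod, hsplit] at h
  exact Nat.le_of_mul_le_mul_left h (Nat.two_pow_pos _)

lemma ncard_sdiff_kerPow {n : ℕ} (hn : n < 2 ^ L) :
    (kerPow (2 ^ L) (n + 1) \ kerPow (2 ^ L) n).ncard = 2 ^ n := by
  have h := ncard_sdiff_add_ncard_of_subset (kerPow_subset_kerPow_succ (N := 2 ^ L) n)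
  rw [ncard_kerPow hn, ncard_kerPow hn.le, pow_succ] at h
  omega

end

section
variable {N : ℕ}

def periods (s : ZMod N → ZMod 2) : AddSubgroup (ZMod N) where
  carrier := {j | ∀ i, s (i + j) = s i}
  add_mem' {a b} ha hb i := by rw [← add_assoc, hb, ha]
  zero_mem' i := by rw [add_zero]
  neg_mem' {a} ha i := by rw [← ha (i + -a), neg_add_cancel_right]

lemma mem_periods {s : ZMod N → ZMod 2} {j : ZMod N} : j ∈ periods s ↔ ∀ i, s (i + j) = s i :=
  Iff.rfl

lemma AddSubgroup.natCast_gcd_mem (H : AddSubgroup (ZMod N)) {p : ℕ} (hp : (p : ZMod N) ∈ H) :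
    (p.gcd N : ZMod N) ∈ H := by
  have h := congrArg (Int.cast : ℤ → ZMod N) (Nat.gcd_eq_gcd_ab p N)
  push_cast [ZMod.natCast_self] at h
  rw [h, zero_mul, add_zero, mul_comm, ← zsmul_eq_mul]
  exact H.zsmul_mem hp _

end

section
variable {L : ℕ}

lemma Nat.gcd_two_pow_dvd_two_pow_pred {p : ℕ} (hp : 0 < p) (hpL : p < 2 ^ L) :
    p.gcd (2 ^ L) ∣ 2 ^ (L - 1) := by
  obtain ⟨k, hkL, hk⟩ := (Nat.dvd_prime_pow Nat.prime_two).1 (Nat.gcd_dvd_right p (2 ^ L))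
  have hkp : 2 ^ k ≤ p := hk ▸ Nat.le_of_dvd hp (Nat.gcd_dvd_left p _)
  have hkL' : k < L := (Nat.pow_lt_pow_iff_right (by norm_num)).1 (hkp.trans_lt hpL)
  rw [hk]
  exact pow_dvd_pow 2 (by omega)

lemma AddSubgroup.two_pow_pred_mem {H : AddSubgroup (ZMod (2 ^ L))} {j : ZMod (2 ^ L)}
    (hj : j ∈ H) (hj0 : j ≠ 0) : (2 : ZMod (2 ^ L)) ^ (L - 1) ∈ H := by
  have hpos : 0 < j.val := ZMod.val_pos.2 hj0
  obtain ⟨m, hm⟩ := Nat.gcd_two_pow_dvd_two_pow_pred hpos j.val_lt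
  have hgcd := H.natCast_gcd_mem (p := j.val) (by rwa [ZMod.natCast_zmod_val])
  rw [show (2 : ZMod (2 ^ L)) ^ (L - 1) = ((2 ^ (L - 1) : ℕ) : ZMod (2 ^ L)) by norm_cast, hm,
    Nat.cast_mul, mul_comm, ← nsmul_eq_mul]
  exact H.nsmul_mem hgcd m

lemma periods_eq_bot {n : ℕ} (hn : 2 ^ (L - 1) ≤ n) {s : ZMod (2 ^ L) → ZMod 2}
    (hs : dOp^[n] s ≠ 0) : periods s = ⊥ := by
  refine (AddSubgroup.eq_bot_iff_forall _).2 fun j hj => by_contra fun hj0 => hs ?_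
  refine iterate_dOp_eq_zero_of_le hn (iterate_dOp_two_pow_eq_zero_iff.2 ?_)
  exact mem_periods.1 (AddSubgroup.two_pow_pred_mem hj hj0)

end

section
variable {N : ℕ}

def cycOrbit (s : ZMod N → ZMod 2) : Set (ZMod N → ZMod 2) :=
  {t | ∃ j : ZMod N, ∀ i, t i = s (i + j)}

lemma cycOrbit_eq_range (s : ZMod N → ZMod 2) :
    cycOrbit s = range fun (j : ZMod N) i => s (i + j) := by
  ext t
  simp only [cycOrbit, mem_ofPred_eq, mem_range, funext_iff, eq_comm]

lemma mem_cycOrbit_self (s : ZMod N → ZMod 2) : s ∈ cycOrbit s := ⟨0, fun i => by rw [add_zero]⟩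

lemma cycOrbit_eq_of_mem {s t : ZMod N → ZMod 2} (h : t ∈ cycOrbit s) :
    cycOrbit t = cycOrbit s := by
  obtain ⟨j, hj⟩ := h
  ext u
  constructor
  · rintro ⟨k, hk⟩
    exact ⟨k + j, fun i => by rw [hk, hj, add_assoc]⟩
  · rintro ⟨k, hk⟩
    exact ⟨k - j, fun i => by rw [hk, hj, add_assoc, sub_add_cancel]⟩

lemma mem_kerPow_iff_of_mem_cycOrbit {s t : ZMod N → ZMod 2} (h : t ∈ cycOrbit s) (c : ℕ) :
    t ∈ kerPow N c ↔ s ∈ kerPow N c := by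
  obtain ⟨j, hj⟩ := h
  obtain rfl : t = fun i => s (i + j) := funext hj
  simp only [kerPow, mem_ofPred_eq, iterate_dOp_shift, funext_iff, Pi.zero_apply]
  exact ⟨fun h i => by simpa using h (i - j), fun h i => h _⟩

lemma ncard_cycOrbit [NeZero N] {s : ZMod N → ZMod 2} (hs : periods s = ⊥) :
    (cycOrbit s).ncard = N := by
  have hinj : Injective fun (j : ZMod N) i => s (i + j) := by
    intro j k hjk
    have hper : j - k ∈ periods s := fun i => by
      convert congrFun hjk (i - k) using 2 <;> abel
    rw [hs, AddSubgroup.mem_bot, sub_eq_zero] at hper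
    exact hper
  rw [cycOrbit_eq_range, ncard_range_of_injective hinj, Nat.card_zmod]

lemma ncard_eq_ncard_cycOrbits_mul [NeZero N] {T : Set (ZMod N → ZMod 2)} {k : ℕ}
    (hT : ∀ s ∈ T, cycOrbit s ⊆ T) (hk : ∀ s ∈ T, (cycOrbit s).ncard = k) :
    T.ncard = {O | ∃ s ∈ T, O = cycOrbit s}.ncard * k := by
  set P := {O | ∃ s ∈ T, O = cycOrbit s}
  have hunion : T = ⋃ O ∈ P, O := by
    ext t
    simp only [mem_iUnion, exists_prop]
    constructor
    · intro ht
      exact ⟨cycOrbit t, ⟨t, ht, rfl⟩, mem_cycOrbit_self t⟩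
    · rintro ⟨O, ⟨s, hs, rfl⟩, ht⟩
      exact hT s hs ht
  have hdisj : P.PairwiseDisjoint id := by
    rintro _ ⟨s, -, rfl⟩ _ ⟨s', -, rfl⟩ hne
    refine disjoint_left.2 fun t hts hts' => hne ?_
    rw [← cycOrbit_eq_of_mem hts, cycOrbit_eq_of_mem hts']
  calc T.ncard = ∑ᶠ O ∈ P, O.ncard :=
        hunion ▸ (toFinite P).ncard_biUnion (fun _ _ => toFinite _) hdisj
    _ = ∑ᶠ O ∈ P, 1 * k := finsum_mem_congr rfl fun _ ⟨s, hs, hO⟩ => by rw [hO, hk s hs, one_mul]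
    _ = P.ncard * k := by rw [← finsum_mem_mul, finsum_one]

end

theorem stmt_1 (n : ℕ) (hn : 1 ≤ n) :
    letI L := Nat.log 2 n + 1
    letI T : Set (ZMod (2 ^ L) → ZMod 2) :=
      {s | dOp^[n + 1] s = 0 ∧ dOp^[n] s ≠ 0}
    letI orbits : Set (Set (ZMod (2 ^ L) → ZMod 2)) :=
      {O | ∃ s ∈ T, O = {t | ∃ j : ZMod (2 ^ L), ∀ i, t i = s (i + j)}}
    (∀ s ∈ T, linComp s = n + 1) ∧
    (∀ s ∈ T, ∀ p : ℕ, 0 < p → p < 2 ^ L →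
        ∃ i : ZMod (2 ^ L), s (i + (p : ZMod (2 ^ L))) ≠ s i) ∧
    T.ncard = 2 ^ n ∧
    orbits.ncard = 2 ^ (n - Nat.log 2 n - 1) ∧
    (∀ O ∈ orbits, O ⊆ T ∧ O.ncard = 2 ^ L) ∧
    (∀ x : Fin n → ZMod 2, ∃! s : ZMod (2 ^ L) → ZMod 2,
        s ∈ T ∧ ∀ i : Fin n, s ((i : ℕ) : ZMod (2 ^ L)) = x i) := by
  set L := Nat.log 2 n + 1
  set T : Set (ZMod (2 ^ L) → ZMod 2) := {s | dOp^[n + 1] s = 0 ∧ dOp^[n] s ≠ 0}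
  have hlow : 2 ^ (L - 1) ≤ n := Nat.pow_log_le_self 2 (by omega)
  have hhigh : n < 2 ^ L := Nat.lt_pow_succ_log_self (by norm_num) n
  have hT : T = kerPow (2 ^ L) (n + 1) \ kerPow (2 ^ L) n := rfl
  have hfree : ∀ s ∈ T, periods s = ⊥ := fun s hs => periods_eq_bot hlow hs.2
  have hcardT : T.ncard = 2 ^ n := ncard_sdiff_kerPow hhigh
  have hinv : ∀ s ∈ T, cycOrbit s ⊆ T := fun s hs t ht => by
    simpa only [hT, mem_sdiff, mem_kerPow_iff_of_mem_cycOrbit ht] using hs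
  have horbits : T.ncard = {O | ∃ s ∈ T, O = cycOrbit s}.ncard * 2 ^ L :=
    ncard_eq_ncard_cycOrbits_mul hinv fun s hs => ncard_cycOrbit (hfree s hs)
  refine ⟨fun s hs => linComp_eq_succ_iff.2 hs, fun s hs p hp hpL => ?_, hcardT, ?_,
    fun O ⟨s, hs, hO⟩ => hO ▸ ⟨hinv s hs, ncard_cycOrbit (hfree s hs)⟩, fun x => ?_⟩
  · by_contra! hper
    have hp0 : (p : ZMod (2 ^ L)) ∈ periods s := mem_periods.2 hper
    rw [hfree s hs, AddSubgroup.mem_bot, ZMod.natCast_eq_zero_iff] at hp0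
    exact absurd (Nat.le_of_dvd hp hp0) (by omega)
  · have hsplit : 2 ^ n = 2 ^ (n - Nat.log 2 n - 1) * 2 ^ L := by
      rw [← pow_add]
      have := Nat.log_lt_self 2 (by omega : n ≠ 0)
      congr 1
      omega
    rw [horbits, hsplit] at hcardT
    exact Nat.eq_of_mul_eq_mul_right (Nat.two_pow_pos L) hcardT
  · simpa only [window, funext_iff] using
      existsUnique_window_eq (S := T) (injOn_window_sdiff_kerPow n) hcardT x
end

section
/- Let n ≥ 2, m ≥ 2, and t be integers with m + 1 < 2^t ≤ 2^{nm}. Suppose there exists a perfect factor PF_{2^n}(m, t) over ZMod 2^n, F : Fin 2^{nm−t} → (ZMod 2^t → ZMod 2^n), such that for every index a the sum of all 2^t entries of F(a) equals 0 in ZMod 2^n. Then there exists a (2^n, 2^t; n, m + 1)-de Bruijn array code of size 2^{nm − t}. -/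
/-- `C` is an `(r, s; n, m)`-de Bruijn array code of size `Δ`: every `n × m` binary
matrix appears exactly once as a window in exactly one codeword. -/
def IsDBAC (r s n m Δ : ℕ) (C : Fin Δ → (ZMod r × ZMod s → ZMod 2)) : Prop :=
  ∀ M : Fin n → Fin m → ZMod 2,
    ∃! p : Fin Δ × ZMod r × ZMod s,
      ∀ (x : Fin n) (y : Fin m),
        C p.1 (p.2.1 + (x : ℕ), p.2.2 + (y : ℕ)) = M x y

/-- A family `F` of cyclic sequences of length `2^t` over the alphabet `ZMod (2^n)`
has the perfect-factor window property for span `m`. -/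
def IsPFq (n m t Δ : ℕ) (F : Fin Δ → (ZMod (2 ^ t) → ZMod (2 ^ n))) : Prop :=
  ∀ x : Fin m → ZMod (2 ^ n),
    ∃! p : Fin Δ × ZMod (2 ^ t),
      ∀ i : Fin m, F p.1 (p.2 + (i : ℕ)) = x i

/-!
Binary de Bruijn sequences of every order `n` exist by cycle joining: among the permutations of
the `2 ^ n` states that map each state to one of its successors in the de Bruijn graph, take one
whose cycle through a fixed state is largest. Two states with the same last `n - 1` bits have the
same successors, so swapping their images keeps the successor property, and if they lie in
different cycles it merges these cycles. Hence the maximal cycle is closed under changing the first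
bit, so under taking successors, so it contains every state.

Let `D` be such a sequence and `S_a` the partial sums of `F a`; since `F a` sums to zero, `S_a`
is well defined on `ZMod (2 ^ t)`. Put `C a (i, j) = D (i + S_a j)`. A matrix `M` is seen at
`(i, j)` in `C a` iff `i + S_a (j + y) = v_y` for every column `y`, where `v_y` is the unique
position of the column `M · y` in `D`; telescoping, iff `F a` reads the word
`(v_{y+1} - v_y)_y` at `j` and `i = v_0 - S_a j`. The perfect factor property provides exactly
one such `(a, j)`.
-/

open Equiv Finset Function

namespace Equiv.Perm

variable {α : Type*} {σ : Perm α} {x y z : α}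

theorem sameCycle_mul_swap_pow_succ [DecidableEq α] (hxy : ¬σ.SameCycle x y) (i : ℕ) :
    (σ * swap x y).SameCycle x ((σ ^ (i + 1)) y) := by
  have hbase : (σ * swap x y).SameCycle x (σ y) := by
    simpa using sameCycle_apply_right.2 (SameCycle.refl (σ * swap x y) x)
  induction i with
  | zero => simpa using hbase
  | succ i ih =>
    rw [pow_succ', mul_apply]
    by_cases hy : (σ ^ (i + 1)) y = y
    · rwa [hy]
    have hx' : (σ ^ (i + 1)) y ≠ x := fun h =>
      hxy (h ▸ sameCycle_pow_right.2 (SameCycle.refl σ y)).symm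
    have : (σ * swap x y) ((σ ^ (i + 1)) y) = σ ((σ ^ (i + 1)) y) := by
      simp [swap_apply_of_ne_of_ne hx' hy]
    rw [← this]
    exact sameCycle_apply_right.2 ih

theorem sameCycle_mul_swap_of_sameCycle_right [DecidableEq α] [Finite α]
    (hxy : ¬σ.SameCycle x y) (hz : σ.SameCycle y z) : (σ * swap x y).SameCycle x z := by
  obtain ⟨i, -, rfl⟩ := hz.exists_pow_eq'
  have : (σ ^ (i + (orderOf σ - 1) + 1)) y = (σ ^ i) y := by
    rw [add_assoc, Nat.sub_add_cancel (orderOf_pos σ), pow_add, pow_orderOf_eq_one, mul_one]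
  exact this ▸ sameCycle_mul_swap_pow_succ hxy _

theorem sameCycle_mul_swap_of_sameCycle [DecidableEq α] [Finite α]
    (hxy : ¬σ.SameCycle x y) (hz : σ.SameCycle x z ∨ σ.SameCycle y z) :
    (σ * swap x y).SameCycle x z := by
  rcases hz with hz | hz
  · have hyx : (σ * swap x y).SameCycle y x := by
      simpa [swap_comm] using sameCycle_mul_swap_of_sameCycle_right (fun h => hxy h.symm) .rfl
    exact hyx.symm.trans (by
      simpa [swap_comm] using sameCycle_mul_swap_of_sameCycle_right (fun h => hxy h.symm) hz)
  · exact sameCycle_mul_swap_of_sameCycle_right hxy hz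

theorem apply_add_natCast {R : Type*} [AddMonoidWithOne R] {e : R → α}
    (he : ∀ k, e (k + 1) = σ (e k)) (k : R) (j : ℕ) : e (k + j) = (σ ^ j) (e k) := by
  induction j with
  | zero => simp
  | succ j ih => rw [Nat.cast_succ, ← add_assoc, he, ih, pow_succ', mul_apply]

theorem exists_zmodEquiv_of_forall_sameCycle [Fintype α] {a : α} (h : ∀ v, σ.SameCycle a v) :
    ∃ e : ZMod (Fintype.card α) ≃ α, ∀ k, e (k + 1) = σ (e k) := by
  classical
  have hmem : ∀ v, v ∈ MulAction.orbit (Subgroup.zpowers σ) a := fun v => by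
    obtain ⟨i, hi⟩ := h v
    exact ⟨⟨σ ^ i, Subgroup.zpow_mem_zpowers σ i⟩, hi⟩
  have hcard : minimalPeriod (σ • ·) a = Fintype.card α := by
    rw [MulAction.minimalPeriod_eq_card]
    exact Fintype.card_congr (Equiv.subtypeUnivEquiv hmem)
  rw [← hcard]
  refine ⟨(MulAction.orbitZPowersEquiv σ a).symm.trans (Equiv.subtypeUnivEquiv hmem),
    fun k => ?_⟩
  obtain ⟨k, rfl⟩ := ZMod.intCast_surjective k
  simp only [Equiv.trans_apply, Equiv.subtypeUnivEquiv_apply]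
  rw [← Int.cast_one, ← Int.cast_add, MulAction.orbitZPowersEquiv_symm_apply',
    MulAction.orbitZPowersEquiv_symm_apply']
  simp [add_comm k 1, zpow_one_add, mul_smul]

end Equiv.Perm

section FeedbackShift

variable {β : Type*} {n : ℕ}

def IsFeedbackShift (σ : Perm (Fin (n + 1) → β)) : Prop :=
  ∀ w, Fin.init (σ w) = Fin.tail w

theorem isFeedbackShift_rotate :
    IsFeedbackShift ((finRotate (n + 1)).symm.arrowCongr (Equiv.refl β)) := by
  intro w
  funext i
  simp [Fin.init, Fin.tail, finRotate_apply, Fin.coeSucc_eq_succ]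

variable {σ : Perm (Fin (n + 1) → β)}

theorem IsFeedbackShift.mul_swap [DecidableEq β] (hσ : IsFeedbackShift σ)
    {x y : Fin (n + 1) → β} (hxy : Fin.tail x = Fin.tail y) :
    IsFeedbackShift (σ * swap x y) := by
  intro w
  rw [Perm.mul_apply, hσ]
  rcases eq_or_ne w x with rfl | hx
  · rw [swap_apply_left, hxy]
  rcases eq_or_ne w y with rfl | hy
  · rw [swap_apply_right, hxy]
  · rw [swap_apply_of_ne_of_ne hx hy]

theorem IsFeedbackShift.pow_apply_zero (hσ : IsFeedbackShift σ) (w : Fin (n + 1) → β)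
    (j : Fin (n + 1)) : (σ ^ (j : ℕ)) w 0 = w j := by
  induction j using Fin.induction generalizing w with
  | zero => rfl
  | succ j ih =>
    rw [Fin.val_succ, pow_succ, Perm.mul_apply, ← Fin.val_castSucc, ih]
    exact congrFun (hσ w) j

theorem IsFeedbackShift.sameCycle_of_forall_tail_eq (hσ : IsFeedbackShift σ)
    (a : Fin (n + 1) → β)
    (hconj : ∀ x y, Fin.tail x = Fin.tail y → σ.SameCycle a x → σ.SameCycle a y)
    (v : Fin (n + 1) → β) : σ.SameCycle a v := by
  have hsucc : ∀ x z, Fin.init z = Fin.tail x → σ.SameCycle a x → σ.SameCycle a z := by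
    intro x z hz hx
    have : Fin.tail x = Fin.tail (σ.symm z) := by rw [← hσ (σ.symm z), apply_symm_apply, hz]
    simpa using Perm.sameCycle_apply_right.2 (hconj _ _ this hx)
  -- the windows of the word `a ++ v` walk from `a` to `v`
  let s : ℕ → β := fun l =>
    if l < n + 1 then a (Fin.ofNat _ l) else v (Fin.ofNat _ (l - (n + 1)))
  have hwin : ∀ j, σ.SameCycle a (fun i : Fin (n + 1) => s (i + j)) := by
    intro j
    induction j with
    | zero => simpa [s, Fin.is_le] using Perm.SameCycle.refl σ a
    | succ j ih =>
      refine hsucc _ _ (funext fun i => ?_) ih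
      simp only [Fin.init, Fin.tail, Fin.val_castSucc, Fin.val_succ]
      ring_nf
  convert hwin (n + 1) using 2 with i
  simp only [s, add_lt_iff_neg_right, not_lt_zero, if_false, add_tsub_cancel_right,
    Fin.ofNat_val_eq_self]

theorem exists_isFeedbackShift_forall_sameCycle [Finite β] (a : Fin (n + 1) → β) :
    ∃ σ : Perm (Fin (n + 1) → β), IsFeedbackShift σ ∧ ∀ v, σ.SameCycle a v := by
  classical
  have : Fintype β := Fintype.ofFinite β
  have : Nonempty {σ : Perm (Fin (n + 1) → β) // IsFeedbackShift σ} :=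
    ⟨⟨_, isFeedbackShift_rotate⟩⟩
  obtain ⟨⟨σ, hσ⟩, hmax⟩ :=
    Finite.exists_max fun σ : {σ // IsFeedbackShift σ} => #{v | σ.1.SameCycle a v}
  refine ⟨σ, hσ, hσ.sameCycle_of_forall_tail_eq a fun x y hxy hx => ?_⟩
  by_contra hy
  have hxy' : ¬σ.SameCycle x y := fun h => hy (hx.trans h)
  have hmerge : ∀ z, σ.SameCycle x z ∨ σ.SameCycle y z → (σ * swap x y).SameCycle a z :=
    fun z hz => (Perm.sameCycle_mul_swap_of_sameCycle hxy' (.inl hx.symm)).symm.trans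
      (Perm.sameCycle_mul_swap_of_sameCycle hxy' hz)
  have hlt : #{v | σ.SameCycle a v} < #{v | (σ * swap x y).SameCycle a v} := by
    refine card_lt_card ((ssubset_iff_of_subset fun v hv => ?_).2 ⟨y, ?_, ?_⟩)
    · simp only [mem_filter, mem_univ, true_and] at hv ⊢
      exact hmerge v (.inl (hx.symm.trans hv))
    · simpa using hmerge y (.inr .rfl)
    · simpa using hy
  exact (hmax ⟨_, hσ.mul_swap hxy⟩).not_gt hlt

end FeedbackShift

section CyclicPartialSum

variable {G : Type*} [AddCommGroup G] {T : ℕ}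

def cyclicPartialSum (f : ZMod T → G) (j : ZMod T) : G :=
  ∑ l ∈ range j.val, f l

theorem sum_range_zmod [NeZero T] (f : ZMod T → G) : ∑ l ∈ range T, f l = ∑ z, f z :=
  sum_nbij' (fun l => l) ZMod.val (by simp) (fun z _ => by simpa using ZMod.val_lt z)
    (fun l hl => ZMod.val_cast_of_lt (mem_range.1 hl)) (fun z _ => ZMod.natCast_zmod_val z)
    (fun _ _ => rfl)

theorem periodic_sum_range [NeZero T] {f : ZMod T → G} (hf : ∑ z, f z = 0) :
    Periodic (fun k => ∑ l ∈ range k, f l) T := by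
  intro k
  simp only [sum_range_add, Nat.cast_add]
  rw [sum_range_zmod fun z : ZMod T => f (k + z),
    Fintype.sum_equiv (Equiv.addLeft (k : ZMod T)) (fun z => f (k + z)) f fun _ => rfl, hf,
    add_zero]

theorem cyclicPartialSum_add_one [NeZero T] {f : ZMod T → G} (hf : ∑ z, f z = 0) (j : ZMod T) :
    cyclicPartialSum f (j + 1) = cyclicPartialSum f j + f j := by
  have hj : j + 1 = ((j.val + 1 : ℕ) : ZMod T) := by simp
  rw [cyclicPartialSum, hj, ZMod.val_natCast, (periodic_sum_range hf).map_mod_nat, sum_range_succ,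
    ZMod.natCast_zmod_val]
  rfl

end CyclicPartialSum

theorem Fin.forall_eq_iff_zero_and_succ_sub {G : Type*} [AddGroup G] {m : ℕ}
    (g u : Fin (m + 1) → G) :
    (∀ y, g y = u y) ↔
      g 0 = u 0 ∧ ∀ k : Fin m, g k.succ - g k.castSucc = u k.succ - u k.castSucc := by
  refine ⟨fun h => ⟨h 0, fun k => by rw [h, h]⟩, fun ⟨h0, hsub⟩ y => ?_⟩
  induction y using Fin.induction with
  | zero => exact h0
  | succ k ih => rw [← sub_add_cancel (g k.succ), hsub k, ih, sub_add_cancel]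

def IsDeBruijn {β : Type*} {N : ℕ} (n : ℕ) (D : ZMod N → β) : Prop :=
  ∀ w : Fin n → β, ∃! v : ZMod N, ∀ x : Fin n, D (v + (x : ℕ)) = w x

theorem exists_isDeBruijn (β : Type*) [Fintype β] [Nonempty β] (n : ℕ) :
    ∃ D : ZMod (Fintype.card β ^ n) → β, IsDeBruijn n D := by
  cases n with
  | zero =>
    refine ⟨fun _ => Classical.arbitrary β, fun w => ⟨0, fun x => x.elim0, fun v _ => ?_⟩⟩
    exact Subsingleton.elim (α := ZMod 1) v 0
  | succ n =>
    obtain ⟨σ, hσ, hcycle⟩ := exists_isFeedbackShift_forall_sameCycle (n := n)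
      (fun _ => Classical.arbitrary β)
    have hequiv := Perm.exists_zmodEquiv_of_forall_sameCycle hcycle
    rw [Fintype.card_fun, Fintype.card_fin] at hequiv
    obtain ⟨e, he⟩ := hequiv
    refine ⟨fun k => e k 0, fun w => ?_⟩
    have hwindow : ∀ k, (∀ x : Fin (n + 1), e (k + (x : ℕ)) 0 = w x) ↔ e k = w := by
      intro k
      simp only [Perm.apply_add_natCast he, hσ.pow_apply_zero, funext_iff]
    simpa only [hwindow] using e.bijective.existsUnique w

theorem isDBAC_of_isPFq {n m t Δ : ℕ} {D : ZMod (2 ^ n) → ZMod 2} (hD : IsDeBruijn n D)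
    {F : Fin Δ → ZMod (2 ^ t) → ZMod (2 ^ n)} (hF : IsPFq n m t Δ F)
    (hsum : ∀ a, ∑ i, F a i = 0) :
    IsDBAC (2 ^ n) (2 ^ t) n (m + 1) Δ fun a p => D (p.1 + cyclicPartialSum (F a) p.2) := by
  intro M
  choose v hv using fun y : Fin (m + 1) => hD fun x => M x y
  set S := fun a => cyclicPartialSum (F a)
  have hcolumns : ∀ a i j, (∀ (x : Fin n) (y : Fin (m + 1)),
      D (i + (x : ℕ) + S a (j + (y : ℕ))) = M x y) ↔
        ∀ y : Fin (m + 1), i + S a (j + (y : ℕ)) = v y := by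
    refine fun a i j => ⟨fun h y => (hv y).2 _ fun x => ?_, fun h x y => ?_⟩
    · rw [add_right_comm]
      exact h x y
    · rw [add_right_comm, h y]
      exact (hv y).1 x
  have htelescope : ∀ a i j, (∀ y : Fin (m + 1), i + S a (j + (y : ℕ)) = v y) ↔
      i + S a j = v 0 ∧ ∀ k : Fin m, F a (j + (k : ℕ)) = v k.succ - v k.castSucc := by
    intro a i j
    rw [Fin.forall_eq_iff_zero_and_succ_sub]
    simp only [Fin.val_zero, Nat.cast_zero, add_zero, Fin.val_succ, Fin.val_castSucc,
      Nat.cast_succ, ← add_assoc, S, cyclicPartialSum_add_one (hsum a), add_sub_cancel_left]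
  obtain ⟨⟨a, j⟩, hw, huniq⟩ := hF fun k => v k.succ - v k.castSucc
  refine ⟨(a, v 0 - S a j, j),
    (hcolumns _ _ _).2 ((htelescope _ _ _).2 ⟨sub_add_cancel _ _, hw⟩),
    fun ⟨a', i', j'⟩ h => ?_⟩
  obtain ⟨h0, hdiff⟩ := (htelescope _ _ _).1 ((hcolumns _ _ _).1 h)
  obtain ⟨rfl, rfl⟩ := Prod.mk.inj (huniq (a', j') hdiff)
  simp [← h0]

theorem stmt_10_general (n m t : ℕ)
    (F : Fin (2 ^ (n * m - t)) → (ZMod (2 ^ t) → ZMod (2 ^ n)))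
    (hF : IsPFq n m t (2 ^ (n * m - t)) F)
    (hsum : ∀ a, ∑ i : ZMod (2 ^ t), F a i = 0) :
    ∃ C : Fin (2 ^ (n * m - t)) → (ZMod (2 ^ n) × ZMod (2 ^ t) → ZMod 2),
      IsDBAC (2 ^ n) (2 ^ t) n (m + 1) (2 ^ (n * m - t)) C := by
  have hdeBruijn := exists_isDeBruijn (ZMod 2) n
  rw [ZMod.card] at hdeBruijn
  obtain ⟨D, hD⟩ := hdeBruijn
  exact ⟨_, isDBAC_of_isPFq hD hF hsum⟩

theorem stmt_10 (n m t : ℕ) (hn : 2 ≤ n) (hm : 2 ≤ m)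
    (hmt : m + 1 < 2 ^ t) (htnm : 2 ^ t ≤ 2 ^ (n * m))
    (F : Fin (2 ^ (n * m - t)) → (ZMod (2 ^ t) → ZMod (2 ^ n)))
    (hF : IsPFq n m t (2 ^ (n * m - t)) F)
    (hsum : ∀ a, ∑ i : ZMod (2 ^ t), F a i = 0) :
    ∃ C : Fin (2 ^ (n * m - t)) → (ZMod (2 ^ n) × ZMod (2 ^ t) → ZMod 2),
      IsDBAC (2 ^ n) (2 ^ t) n (m + 1) (2 ^ (n * m - t)) C :=
  stmt_10_general n m t F hF hsum
end

section
/- Let k, n, m, ℓ be integers with k, n, m ≥ 2, ℓ ≥ 0, and m < 2^{m−ℓ}, and suppose there exists a (2^k, 2^{m−ℓ}; n, m)-de Bruijn array code of size Δ in which every column of every codeword has even weight. Then there exists a (2^k, 2^{m−ℓ}; n + 1, m)-de Bruijn array code of size 2^m · Δ. -/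
/-- The weight of the `j`-th column of a doubly-periodic array `A`. -/
noncomputable def colWeight {r s : ℕ} (A : ZMod r × ZMod s → ZMod 2) (j : ZMod s) : ℕ :=
  {i : ZMod r | A (i, j) = 1}.ncard


open Polynomial Finset

lemma choose_add_pow_two (e J t : ℕ) (ht : t < 2 ^ e) :
    (((J + 2 ^ e).choose t : ZMod 2)) = (J.choose t : ZMod 2) := by
  have h1 : ((X + 1 : Polynomial (ZMod 2)) ^ (J + 2 ^ e)).coeff t
      = ((J + 2 ^ e).choose t : ZMod 2) := by
    rw [Polynomial.coeff_X_add_one_pow]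
  have h2 : (X + 1 : Polynomial (ZMod 2)) ^ (2 ^ e) = X ^ (2 ^ e) + 1 := by
    rw [add_pow_char_pow]
    simp
  have h3 : (X + 1 : Polynomial (ZMod 2)) ^ (J + 2 ^ e)
      = (X + 1) ^ J * X ^ (2 ^ e) + (X + 1) ^ J := by
    rw [pow_add, h2, mul_add, mul_one]
  rw [h3] at h1
  rw [Polynomial.coeff_add, Polynomial.coeff_mul_X_pow', if_neg (by omega),
    Polynomial.coeff_X_add_one_pow, zero_add] at h1
  exact h1.symm

lemma choose_mod_pow_two (e J t : ℕ) (ht : t < 2 ^ e) :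
    ((J.choose t : ZMod 2)) = ((J % 2 ^ e).choose t : ZMod 2) := by
  induction J using Nat.strong_induction_on with
  | _ J ih =>
    rcases lt_or_ge J (2 ^ e) with h | h
    · rw [Nat.mod_eq_of_lt h]
    · obtain ⟨J', rfl⟩ : ∃ J', J = J' + 2 ^ e := ⟨J - 2 ^ e, by omega⟩
      rw [choose_add_pow_two e J' t ht, Nat.add_mod_right]
      exact ih J' (by have := Nat.one_le_two_pow (n := e); omega) 

lemma key_identity (d J t : ℕ) :
    (∑ y ∈ range (d + 1), ((d.choose y : ZMod 2) * ((J + y).choose t : ZMod 2)))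
      = if d ≤ t then ((J.choose (t - d) : ZMod 2)) else 0 := by
  induction d generalizing J with
  | zero => simp
  | succ d ih =>
    have split : (∑ y ∈ range (d + 2), ((d + 1).choose y : ZMod 2) * ((J + y).choose t : ZMod 2))
        = (∑ y ∈ range (d + 1), (d.choose y : ZMod 2) * ((J + y).choose t : ZMod 2))
          + ∑ y ∈ range (d + 1), (d.choose y : ZMod 2) * ((J + 1 + y).choose t : ZMod 2) := by
      rw [Finset.sum_range_succ' _ (d + 1)]
      have step : ∀ y ∈ range (d + 1),
          ((d + 1).choose (y + 1) : ZMod 2) * ((J + (y + 1)).choose t : ZMod 2)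
          = (d.choose (y + 1) : ZMod 2) * ((J + (y + 1)).choose t : ZMod 2)
            + (d.choose y : ZMod 2) * ((J + 1 + y).choose t : ZMod 2) := by
        intro y _
        rw [Nat.choose_succ_succ, Nat.cast_add, add_mul,
          show J + 1 + y = J + (y + 1) by ring]
        ring
      rw [Finset.sum_congr rfl step, Finset.sum_add_distrib]
      have e1 : (∑ y ∈ range (d + 1), (d.choose (y + 1) : ZMod 2) * ((J + (y + 1)).choose t : ZMod 2))
            + ((d + 1).choose 0 : ZMod 2) * ((J + 0).choose t : ZMod 2)
          = ∑ y ∈ range (d + 1), (d.choose y : ZMod 2) * ((J + y).choose t : ZMod 2) := by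
        rw [show ((d + 1).choose 0 : ZMod 2) = (d.choose 0 : ZMod 2) by simp]
        rw [← Finset.sum_range_succ' (fun y => (d.choose y : ZMod 2) * ((J + y).choose t : ZMod 2)) (d + 1)]
        rw [Finset.sum_range_succ _ (d + 1), Nat.choose_eq_zero_of_lt (by omega)]
        simp
      rw [add_right_comm, e1]
    rw [split, ih J, ih (J + 1)]
    rcases lt_or_ge t d with h | h
    · rw [if_neg (by omega), if_neg (by omega), if_neg (by omega)]; simp
    · rcases eq_or_lt_of_le h with rfl | h'
      · rw [if_pos le_rfl, if_pos le_rfl, if_neg (by omega), Nat.sub_self]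
        simp [CharTwo.add_self_eq_zero]
      · rw [if_pos (by omega), if_pos (by omega), if_pos (by omega)]
        have e3 : t - d = (t - (d + 1)) + 1 := by omega
        rw [e3, Nat.choose_succ_succ' J, Nat.cast_add]
        ring_nf
        rw [show ((2 : ZMod 2)) = 0 from rfl, mul_zero, zero_add]

lemma window_inj (m J : ℕ) (u : Fin m → ZMod 2)
    (h : ∀ y : Fin m, ∑ t : Fin m, u t * ((J + (y : ℕ)).choose (t : ℕ) : ZMod 2) = 0) :
    u = 0 := by
  by_contra hu
  have hex : ∃ t : Fin m, u t ≠ 0 := by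
    by_contra h'
    push_neg at h'
    exact hu (funext h')
  set T : Finset (Fin m) := Finset.univ.filter (fun t => u t ≠ 0) with hT
  have hTne : T.Nonempty := by
    obtain ⟨t, ht⟩ := hex
    exact ⟨t, by simp [hT, ht]⟩
  set t0 := T.max' hTne with ht0
  have ht0mem : u t0 ≠ 0 := by
    have := T.max'_mem hTne
    simpa [hT] using this
  have hmax : ∀ t : Fin m, u t ≠ 0 → t ≤ t0 := fun t ht =>
    T.le_max' t (by simp [hT, ht])
  set d := (t0 : ℕ) with hd
  have hdm : d < m := t0.isLt
  have key : (0 : ZMod 2)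
      = ∑ t : Fin m, u t * (if d ≤ (t : ℕ) then ((J.choose ((t : ℕ) - d) : ZMod 2)) else 0) := by
    calc (0 : ZMod 2)
        = ∑ y ∈ range (d + 1), ∑ t : Fin m,
            (d.choose y : ZMod 2) * (u t * ((J + y).choose (t : ℕ) : ZMod 2)) := by
          symm
          apply Finset.sum_eq_zero
          intro y hy
          have hym : y < m := by have := Finset.mem_range.mp hy; omega
          rw [← Finset.mul_sum,
            show (∑ t : Fin m, u t * ((J + y).choose (t : ℕ) : ZMod 2)) = 0 from
              by simpa using h ⟨y, hym⟩, mul_zero]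
      _ = ∑ t : Fin m, ∑ y ∈ range (d + 1),
            (d.choose y : ZMod 2) * (u t * ((J + y).choose (t : ℕ) : ZMod 2)) :=
          Finset.sum_comm
      _ = ∑ t : Fin m, u t *
            ∑ y ∈ range (d + 1), (d.choose y : ZMod 2) * ((J + y).choose (t : ℕ) : ZMod 2) := by
          refine Finset.sum_congr rfl (fun t _ => ?_)
          rw [Finset.mul_sum]
          exact Finset.sum_congr rfl (fun y _ => by ring)
      _ = ∑ t : Fin m, u t *
            (if d ≤ (t : ℕ) then ((J.choose ((t : ℕ) - d) : ZMod 2)) else 0) := by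
          refine Finset.sum_congr rfl (fun t _ => ?_)
          rw [key_identity]
  have hzero : u t0 = 0 := by
    rw [Finset.sum_eq_single t0 ?_ ?_] at key
    · rw [if_pos (le_refl d), Nat.sub_self, Nat.choose_zero_right] at key
      simpa using key.symm
    · intro t _ htne
      rcases le_or_gt d (t : ℕ) with hle | hlt
      · have hlt' : (t0 : ℕ) < (t : ℕ) :=
          lt_of_le_of_ne hle (fun hh => htne (Fin.ext hh.symm))
        have : u t = 0 := by
          by_contra hne
          exact absurd (hmax t hne) (not_le.mpr hlt')
        simp [this]
      · rw [if_neg (by omega), mul_zero]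
    · intro h'
      exact absurd (Finset.mem_univ t0) h'
  exact ht0mem hzero

noncomputable def rowFun (m s : ℕ) (v : Fin m → ZMod 2) (j : ZMod s) : ZMod 2 :=
  ∑ t : Fin m, v t * ((j.val.choose (t : ℕ) : ZMod 2))

lemma rowFun_sub (m s : ℕ) (v w : Fin m → ZMod 2) (j : ZMod s) :
    rowFun m s (v - w) j = rowFun m s v j - rowFun m s w j := by
  unfold rowFun
  rw [← Finset.sum_sub_distrib]
  exact Finset.sum_congr rfl (fun t _ => by simp [sub_mul])

lemma choose_val_bridge (m e : ℕ) (hms : m < 2 ^ e) (j : ZMod (2 ^ e)) (y : Fin m) (t : ℕ)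
    (ht : t < 2 ^ e) :
    (((j + (y : ℕ)).val.choose t : ZMod 2)) = (((j.val + (y : ℕ)).choose t : ZMod 2)) := by
  haveI : NeZero (2 ^ e) := ⟨by positivity⟩
  rw [ZMod.val_add, ZMod.val_natCast, Nat.add_mod_mod, ← choose_mod_pow_two e _ t ht]

lemma rowFun_window_bijective (m e : ℕ) (hms : m < 2 ^ e) (j : ZMod (2 ^ e)) :
    Function.Bijective
      (fun v : Fin m → ZMod 2 => fun y : Fin m => rowFun m (2 ^ e) v (j + (y : ℕ))) := by
  rw [← Finite.injective_iff_bijective]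
  intro v w hvw
  have hsub : ∀ y : Fin m, rowFun m (2 ^ e) (v - w) (j + (y : ℕ)) = 0 := by
    intro y
    have h2 : rowFun m (2 ^ e) v (j + (y : ℕ)) = rowFun m (2 ^ e) w (j + (y : ℕ)) :=
      congrFun hvw y
    rw [rowFun_sub, h2, sub_self]
  have : v - w = 0 := by
    apply window_inj m j.val
    intro y
    have := hsub y
    unfold rowFun at this
    rw [← this]
    refine Finset.sum_congr rfl (fun t _ => ?_)
    rw [choose_val_bridge m e hms j y t (lt_trans t.isLt hms)]
  rwa [sub_eq_zero] at this

def prefixSum (r s : ℕ) (A : ZMod r × ZMod s → ZMod 2) (i : ZMod r) (j : ZMod s) : ZMod 2 :=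
  ∑ x ∈ Finset.range i.val, A ((x : ZMod r), j)

lemma sum_range_eq_sum_univ (r : ℕ) [NeZero r] (f : ZMod r → ZMod 2) :
    ∑ x ∈ Finset.range r, f (x : ZMod r) = ∑ i : ZMod r, f i := by
  apply Finset.sum_nbij' (i := fun (x : ℕ) => (x : ZMod r)) (j := fun (a : ZMod r) => a.val)
  · intro x _; exact Finset.mem_univ _
  · intro a _; exact Finset.mem_range.mpr (ZMod.val_lt a)
  · intro x hx; exact ZMod.val_cast_of_lt (Finset.mem_range.mp hx)
  · intro a _; exact ZMod.natCast_rightInverse a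
  · intro x _; rfl

lemma colSum_zero (r s : ℕ) [NeZero r] (A : ZMod r × ZMod s → ZMod 2) (j : ZMod s)
    (h : Even (colWeight A j)) : ∑ i : ZMod r, A (i, j) = 0 := by
  classical
  have hsplit : ∑ i : ZMod r, A (i, j)
      = ∑ i ∈ Finset.univ.filter (fun i : ZMod r => A (i, j) = 1), A (i, j) := by
    symm
    apply Finset.sum_filter_of_ne
    intro i _ hne
    have h01 : ∀ a : ZMod 2, a = 0 ∨ a = 1 := by decide
    rcases h01 (A (i, j)) with h0 | h1
    · exact absurd h0 hne
    · exact h1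
  have hones : ∑ i ∈ Finset.univ.filter (fun i : ZMod r => A (i, j) = 1), A (i, j)
      = ((Finset.univ.filter (fun i : ZMod r => A (i, j) = 1)).card : ZMod 2) := by
    rw [Finset.sum_congr rfl (fun i hi => (Finset.mem_filter.mp hi).2)]
    simp
  have hcard : (Finset.univ.filter (fun i : ZMod r => A (i, j) = 1)).card = colWeight A j := by
    unfold colWeight
    rw [Set.ncard_eq_toFinset_card']
    congr 1
    ext i
    simp
  rw [hsplit, hones, hcard]
  obtain ⟨q, hq⟩ := h
  rw [hq]
  push_cast
  rw [CharTwo.add_self_eq_zero]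

lemma prefixSum_step (r s : ℕ) [NeZero r] (hr : 1 < r)
    (A : ZMod r × ZMod s → ZMod 2) (i : ZMod r) (j : ZMod s)
    (h : ∑ i' : ZMod r, A (i', j) = 0) :
    prefixSum r s A (i + 1) j = prefixSum r s A i j + A (i, j) := by
  haveI : Fact (1 < r) := ⟨hr⟩
  unfold prefixSum
  have hival : i = ((i.val : ℕ) : ZMod r) := (ZMod.natCast_rightInverse i).symm
  have hv1 : (1 : ZMod r).val = 1 := ZMod.val_one r
  rcases lt_or_ge (i.val + 1) r with hlt | hge
  · have hval : (i + 1).val = i.val + 1 := by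
      rw [ZMod.val_add_of_lt (by omega)]
      omega
    rw [hval, Finset.sum_range_succ, ← hival]
  · have hival' : i.val = r - 1 := by have := ZMod.val_lt i; omega
    have hval : (i + 1).val = 0 := by
      rw [ZMod.val_add, hv1, hival']
      simp [Nat.sub_add_cancel (le_of_lt hr)]
    rw [hval, Finset.sum_range_zero]
    have hfull : (0 : ZMod 2) = ∑ x ∈ Finset.range r, A ((x : ZMod r), j) := by
      rw [sum_range_eq_sum_univ r (fun i' => A (i', j))]
      exact h.symm
    have hrr : Finset.range r = Finset.range (i.val + 1) := by rw [hival']; congr 1; omega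
    rw [hfull, hrr, Finset.sum_range_succ, ← hival]

theorem stmt_12 (k n m l Δ : ℕ) (hk : 2 ≤ k) (hn : 2 ≤ n) (hm : 2 ≤ m)
    (hml : m < 2 ^ (m - l))
    (C : Fin Δ → (ZMod (2 ^ k) × ZMod (2 ^ (m - l)) → ZMod 2))
    (hC : IsDBAC (2 ^ k) (2 ^ (m - l)) n m Δ C)
    (heven : ∀ c, ∀ j : ZMod (2 ^ (m - l)), Even (colWeight (C c) j)) :
    ∃ C' : Fin (2 ^ m * Δ) → (ZMod (2 ^ k) × ZMod (2 ^ (m - l)) → ZMod 2),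
      IsDBAC (2 ^ k) (2 ^ (m - l)) (n + 1) m (2 ^ m * Δ) C' := by
  haveI : NeZero (2 ^ k) := ⟨by positivity⟩
  haveI : NeZero (2 ^ (m - l)) := ⟨by positivity⟩
  have hr1 : 1 < 2 ^ k := by
    calc 1 < 2 ^ 2 := by norm_num
    _ ≤ 2 ^ k := Nat.pow_le_pow_right (by norm_num) hk
  have hcol : ∀ c (j' : ZMod (2 ^ (m - l))), ∑ i' : ZMod (2 ^ k), C c (i', j') = 0 :=
    fun c j' => colSum_zero _ _ _ _ (heven c j')
  have hstep : ∀ c (i' : ZMod (2 ^ k)) (j' : ZMod (2 ^ (m - l))),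
      prefixSum _ _ (C c) (i' + 1) j' = prefixSum _ _ (C c) i' j' + C c (i', j') :=
    fun c i' j' => prefixSum_step _ _ hr1 (C c) i' j' (hcol c j')
  have hbij : ∀ j : ZMod (2 ^ (m - l)),
      Function.Bijective (fun v : Fin m → ZMod 2 =>
        fun y : Fin m => rowFun m (2 ^ (m - l)) v (j + (y : ℕ))) :=
    fun j => rowFun_window_bijective m (m - l) hml j
  let E1 : (Fin m → ZMod 2) ≃ Fin (2 ^ m) := Fintype.equivFinOfCardEq (by simp)
  let enc : (Fin m → ZMod 2) → Fin Δ → Fin (2 ^ m * Δ) :=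
    fun v c => finProdFinEquiv (E1 v, c)
  let dv : Fin (2 ^ m * Δ) → (Fin m → ZMod 2) := fun p => E1.symm (finProdFinEquiv.symm p).1
  let dc : Fin (2 ^ m * Δ) → Fin Δ := fun p => (finProdFinEquiv.symm p).2
  have hdv : ∀ v c, dv (enc v c) = v := by
    intro v c
    show E1.symm ((finProdFinEquiv.symm (finProdFinEquiv (E1 v, c))).1) = v
    rw [Equiv.symm_apply_apply, Equiv.symm_apply_apply]
  have hdc : ∀ v c, dc (enc v c) = c := by
    intro v c
    show (finProdFinEquiv.symm (finProdFinEquiv (E1 v, c))).2 = c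
    rw [Equiv.symm_apply_apply]
  have hencdec : ∀ p, enc (dv p) (dc p) = p := by
    intro p
    show finProdFinEquiv (E1 (E1.symm (finProdFinEquiv.symm p).1), (finProdFinEquiv.symm p).2) = p
    rw [Equiv.apply_symm_apply, Prod.mk.eta, Equiv.apply_symm_apply]
  refine ⟨fun p q => rowFun m (2 ^ (m - l)) (dv p) q.2
    + prefixSum (2 ^ k) (2 ^ (m - l)) (C (dc p)) q.1 q.2, ?_⟩
  intro M
  -- difference matrix
  set D : Fin n → Fin m → ZMod 2 := fun x y => M x.castSucc y + M x.succ y with hD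
  obtain ⟨⟨c, i, j⟩, hwin, huniq⟩ := hC D
  simp only at hwin
  -- choose v for the first row
  obtain ⟨v, hv⟩ := (hbij j).surjective
    (fun y => M 0 y - prefixSum (2 ^ k) (2 ^ (m - l)) (C c) i (j + (y : ℕ)))
  have hrow : ∀ y : Fin m, rowFun m (2 ^ (m - l)) v (j + (y : ℕ))
      + prefixSum (2 ^ k) (2 ^ (m - l)) (C c) i (j + (y : ℕ)) = M 0 y := by
    intro y
    have := congrFun hv y
    simp only at this
    rw [this, sub_add_cancel]
  -- main window computation
  have main : ∀ (x : ℕ) (hx : x < n + 1) (y : Fin m),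
      rowFun m (2 ^ (m - l)) v (j + (y : ℕ))
        + prefixSum (2 ^ k) (2 ^ (m - l)) (C c) (i + (x : ℕ)) (j + (y : ℕ)) = M ⟨x, hx⟩ y := by
    intro x
    induction x with
    | zero =>
      intro hx y
      rw [show ((0 : ℕ) : ZMod (2 ^ k)) = 0 by push_cast; rfl, add_zero,
        show (⟨0, hx⟩ : Fin (n + 1)) = 0 from Fin.mk_zero .., hrow y]
    | succ x ih =>
      intro hx y
      have hxn : x < n := by omega
      have hcast : i + ((x + 1 : ℕ) : ZMod (2 ^ k)) = (i + (x : ℕ)) + 1 := by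
        push_cast; ring
      have hDx := hwin ⟨x, hxn⟩ y
      simp only [Fin.castSucc_mk, Fin.succ_mk] at hDx
      rw [hcast, hstep, ← add_assoc, ih (by omega) y, hDx]
      rw [hD]
      simp only [Fin.castSucc_mk, Fin.succ_mk]
      rw [← add_assoc, CharTwo.add_self_eq_zero, zero_add]
  refine ⟨⟨enc v c, i, j⟩, ?_, ?_⟩
  · intro x y
    simp only [hdv, hdc]
    have := main x.val x.isLt y
    rwa [Fin.eta] at this
  · rintro ⟨p', i', j'⟩ hp'
    simp only at hp'
    -- recover the difference window
    have hD' : ∀ (x : Fin n) (y : Fin m),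
        C (dc p') (i' + ((x : ℕ) : ZMod (2 ^ k)), j' + (y : ℕ)) = D x y := by
      intro x y
      have h1 := hp' x.castSucc y
      have h2 := hp' x.succ y
      have hcast : i' + ((x.succ : ℕ) : ZMod (2 ^ k)) = (i' + (x.castSucc : ℕ)) + 1 := by
        simp only [Fin.val_succ, Fin.coe_castSucc]
        push_cast; ring
      rw [hcast, hstep, ← add_assoc] at h2
      rw [h1] at h2
      have hc : C (dc p') (i' + ((x : ℕ) : ZMod (2 ^ k)), j' + (y : ℕ))
          = M x.succ y - M x.castSucc y := by
        have : ((x.castSucc : ℕ) : ZMod (2 ^ k)) = ((x : ℕ) : ZMod (2 ^ k)) := by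
          simp [Fin.coe_castSucc]
        rw [← this]
        exact eq_sub_of_add_eq' h2
      rw [hc, hD]
      rw [CharTwo.sub_eq_add, add_comm]
    have huq := huniq (dc p', i', j') (by intro x y; exact hD' x y)
    have hceq : dc p' = c := congrArg Prod.fst huq
    have hieq : i' = i := congrArg (fun q => q.2.1) huq
    have hjeq : j' = j := congrArg (fun q => q.2.2) huq
    -- recover the first row
    have hrow' : ∀ y : Fin m, rowFun m (2 ^ (m - l)) (dv p') (j + (y : ℕ))
        = rowFun m (2 ^ (m - l)) v (j + (y : ℕ)) := by
      intro y
      have h0 := hp' 0 y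
      rw [hceq, hieq, hjeq, show (((0 : Fin (n + 1)) : ℕ) : ZMod (2 ^ k)) = 0 by simp,
        add_zero] at h0
      have := hrow y
      have h3 : rowFun m (2 ^ (m - l)) (dv p') (j + (y : ℕ))
          + prefixSum (2 ^ k) (2 ^ (m - l)) (C c) i (j + (y : ℕ))
          = rowFun m (2 ^ (m - l)) v (j + (y : ℕ))
          + prefixSum (2 ^ k) (2 ^ (m - l)) (C c) i (j + (y : ℕ)) := by
        rw [h0, this]
      exact add_right_cancel h3
    have hveq : dv p' = v := (hbij j).injective (funext hrow')
    have hpeq : p' = enc v c := by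
      rw [← hveq, ← hceq, hencdec]
    rw [hpeq, hieq, hjeq]
end

section
/- Let k, n, t, m be integers with k, n, t, m ≥ 2 and suppose there exists a (2^k, 2^t; n, m)-de Bruijn array code of size Δ in which every column of every codeword has even weight. Then there exists a (2^k, 2^{m+t}; n + 1, m)-de Bruijn array code of size Δ. -/
/-!
Summing each codeword down its columns gives arrays whose vertical differences are the
codewords; the partial sums are cyclic because every column has even weight. Add to every row
a binary sequence `e` of period `2 ^ (m + t)` in which each pair (position mod `2 ^ t`,
length-`m` window) occurs exactly once. An `(n + 1) × m` window of the result is then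
determined by the `n × m` window of differences, which locates the codeword, the row and the
column mod `2 ^ t`, together with its top row, which locates the window of `e`.

Such a sequence is read off a single-cycle feedback shift register carrying a phase counter
mod `2 ^ t`. Flipping the feedback at one state composes the register permutation with the
transposition of the two states that share that feedback input, which joins their cycles if
they were different; so a feedback minimising the number of cycles has only one.
-/

open Equiv Finset
open Function (Injective Surjective Bijective update)

namespace Equiv.Perm

variable {α : Type*} [DecidableEq α] [Finite α] {σ : Perm α} {x y a b : α}

theorem sameCycle_mul_swap (h : ¬σ.SameCycle x y) : (σ * swap x y).SameCycle x y := by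
  by_contra hxy
  -- every `σ ^ (k + 1) y` stays in the `σ * swap x y`-cycle of `x`, which does not contain `y`
  have hiter : ∀ k : ℕ, (σ * swap x y).SameCycle x ((σ ^ (k + 1)) y) := by
    intro k
    induction k with
    | zero => exact ⟨1, by simp⟩
    | succ k ih =>
      have hx : (σ ^ (k + 1)) y ≠ x := fun e =>
        h (SameCycle.symm ⟨(k + 1 : ℕ), by rw [zpow_natCast, e]⟩)
      have hy : (σ ^ (k + 1)) y ≠ y := fun e => hxy (by rwa [e] at ih)
      refine ih.trans ⟨1, ?_⟩
      rw [zpow_one, mul_apply, swap_apply_of_ne_of_ne hx hy, pow_succ' σ (k + 1), mul_apply]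
  have := hiter (orderOf σ - 1)
  rw [Nat.sub_add_cancel (orderOf_pos σ), pow_orderOf_eq_one, one_apply] at this
  exact hxy this

theorem SameCycle.mul_swap (h : ¬σ.SameCycle x y) (hab : σ.SameCycle a b) :
    (σ * swap x y).SameCycle a b := by
  have hsucc : ∀ z, (σ * swap x y).SameCycle z (σ z) := by
    intro z
    by_cases hzx : z = x
    · subst hzx
      exact (sameCycle_mul_swap h).trans ⟨1, by simp⟩
    by_cases hzy : z = y
    · subst hzy
      exact (sameCycle_mul_swap h).symm.trans ⟨1, by simp⟩
    exact ⟨1, by simp [swap_apply_of_ne_of_ne hzx hzy]⟩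
  obtain ⟨i, -, rfl⟩ := hab.exists_pow_eq'
  clear hab
  induction i with
  | zero => exact SameCycle.refl _ _
  | succ i ih => exact ih.trans (by rw [pow_succ', mul_apply]; exact hsucc _)

theorem card_quotient_sameCycle_mul_swap_lt (h : ¬σ.SameCycle x y) :
    Nat.card (Quotient (SameCycle.setoid (σ * swap x y))) <
      Nat.card (Quotient (SameCycle.setoid σ)) := by
  classical
  have := Fintype.ofFinite α
  let merge : Quotient (SameCycle.setoid σ) → Quotient (SameCycle.setoid (σ * swap x y)) :=
    Quotient.map id fun _ _ => SameCycle.mul_swap h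
  have hsurj : Surjective merge := Quotient.ind fun z => ⟨⟦z⟧, rfl⟩
  have hninj : ¬Injective merge := fun hinj =>
    h (Quotient.exact (hinj (Quotient.sound (sameCycle_mul_swap h) :
      merge ⟦x⟧ = merge ⟦y⟧)))
  simp only [Nat.card_eq_fintype_card]
  exact Fintype.card_lt_of_surjective_not_injective merge hsurj hninj

end Equiv.Perm

theorem ZMod.eq_zero_or_eq_one (b : ZMod 2) : b = 0 ∨ b = 1 := by
  revert b
  decide

theorem ZMod.sum_range_natCast {r : ℕ} [NeZero r] {M : Type*} [AddCommMonoid M]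
    (f : ZMod r → M) : ∑ k ∈ range r, f k = ∑ x, f x :=
  Finset.sum_nbij' Nat.cast ZMod.val (by simp) (by simp [ZMod.val_lt])
    (fun k hk => ZMod.val_cast_of_lt (mem_range.mp hk)) (fun x _ => ZMod.natCast_zmod_val x)
    (fun _ _ => rfl)

theorem ZMod.exists_add_one_eq_add_of_sum_eq_zero {r : ℕ} [NeZero r] {M : Type*}
    [AddCommMonoid M] (f : ZMod r → M) (hf : ∑ x, f x = 0) :
    ∃ F : ZMod r → M, ∀ i, F (i + 1) = F i + f i := by
  refine ⟨fun i => ∑ k ∈ range i.val, f k, fun i => ?_⟩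
  have hi : i + 1 = ((i.val + 1 : ℕ) : ZMod r) := by
    rw [Nat.cast_succ, ZMod.natCast_zmod_val]
  have hsucc : ∑ k ∈ range (i.val + 1), f k = ∑ k ∈ range i.val, f k + f i := by
    rw [sum_range_succ, ZMod.natCast_zmod_val]
  simp only [hi, ZMod.val_natCast, ← hsucc]
  rcases (Nat.succ_le_of_lt (ZMod.val_lt i)).lt_or_eq with h | h
  · rw [Nat.mod_eq_of_lt h]
  · rw [show i.val + 1 = r from h, Nat.mod_self, range_zero, sum_empty, ZMod.sum_range_natCast, hf]

theorem sum_zmod_two_eq_ncard {α : Type*} [Fintype α] (f : α → ZMod 2) :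
    ∑ a, f a = {a | f a = 1}.ncard := by
  have hf : ∀ a, f a = if f a = 1 then 1 else 0 := fun a => by
    rcases ZMod.eq_zero_or_eq_one (f a) with h | h <;> simp [h]
  rw [sum_congr rfl fun a _ => hf a, sum_boole, Set.ncard_eq_toFinset_card']
  simp

theorem Fin.forall_eq_iff_zero_and_sub {G : Type*} [AddGroup G] {n : ℕ}
    {u v : Fin (n + 1) → G} :
    (∀ x, u x = v x) ↔
      u 0 = v 0 ∧ ∀ x : Fin n, u x.succ - u x.castSucc = v x.succ - v x.castSucc := by
  refine ⟨fun h => ⟨h 0, fun x => by rw [h, h]⟩, fun ⟨h0, hsub⟩ x => ?_⟩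
  induction x using Fin.induction with
  | zero => exact h0
  | succ x ih => simpa [ih] using hsub x

namespace FeedbackShift

variable {s m : ℕ} (g : ZMod s × (Fin m → ZMod 2) → ZMod 2)

-- The outgoing bit `x.2 0` enters the feedback additively, which makes the step injective.
def step (x : ZMod s × (Fin (m + 1) → ZMod 2)) : ZMod s × (Fin (m + 1) → ZMod 2) :=
  (x.1 + 1, Fin.snoc (Fin.tail x.2) (x.2 0 + g (x.1, Fin.tail x.2)))

theorem step_injective : Injective (step g) := by
  rintro ⟨a, w⟩ ⟨a', w'⟩ h
  simp only [step, Prod.mk.injEq, add_left_inj] at h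
  obtain ⟨rfl, h⟩ := h
  obtain ⟨htail, hlast⟩ := Fin.snoc_inj.mp h
  rw [htail, add_left_inj] at hlast
  rw [← Fin.cons_self_tail w, ← Fin.cons_self_tail w', hlast, htail]

variable [NeZero s]

noncomputable def perm : Perm (ZMod s × (Fin (m + 1) → ZMod 2)) :=
  Equiv.ofBijective (step g) (Finite.injective_iff_bijective.mp (step_injective g))

theorem perm_apply (x : ZMod s × (Fin (m + 1) → ZMod 2)) : perm g x = step g x := rfl

theorem perm_update (p : ZMod s × (Fin m → ZMod 2)) :
    perm (update g p (g p + 1)) = perm g * swap (p.1, Fin.cons 0 p.2) (p.1, Fin.cons 1 p.2) := by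
  ext1 ⟨a, w⟩
  rw [← Fin.cons_self_tail w]
  generalize w 0 = b, Fin.tail w = u
  rw [Perm.mul_apply, perm_apply, perm_apply]
  by_cases hp : (a, u) = p
  · subst hp
    obtain rfl | rfl := ZMod.eq_zero_or_eq_one b <;>
      simp [step, add_comm, ← add_assoc, CharTwo.add_self_eq_zero]
  · rw [swap_apply_of_ne_of_ne (by simp_all [Prod.ext_iff]) (by simp_all [Prod.ext_iff])]
    simp [step, Function.update_of_ne hp]

theorem fst_perm_pow (k : ℕ) (x : ZMod s × (Fin (m + 1) → ZMod 2)) :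
    ((perm g ^ k) x).1 = x.1 + k := by
  induction k generalizing x with
  | zero => simp
  | succ k ih =>
    rw [pow_succ, Perm.mul_apply, ih, perm_apply, step]
    push_cast
    ring

theorem perm_pow_apply_snd_zero {k : ℕ} (hk : k < m + 1)
    (x : ZMod s × (Fin (m + 1) → ZMod 2)) :
    ((perm g ^ k) x).2 0 = x.2 ⟨k, hk⟩ := by
  induction k generalizing x with
  | zero => rfl
  | succ k ih =>
    rw [pow_succ, Perm.mul_apply, ih (by omega), perm_apply, step]
    exact Fin.snoc_castSucc (α := fun _ => ZMod 2) (i := ⟨k, by omega⟩) ..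

section Connected

variable {g} (H : ∀ a u, (perm g).SameCycle (a, Fin.cons 0 u) (a, Fin.cons 1 u))
include H

theorem sameCycle_cons (a : ZMod s) (u : Fin m → ZMod 2) (b b' : ZMod 2) :
    (perm g).SameCycle (a, Fin.cons b u) (a, Fin.cons b' u) := by
  obtain rfl | rfl := ZMod.eq_zero_or_eq_one b <;>
    obtain rfl | rfl := ZMod.eq_zero_or_eq_one b'
  exacts [.rfl, H a u, (H a u).symm, .rfl]

theorem sameCycle_snoc (x : ZMod s × (Fin (m + 1) → ZMod 2)) (b : ZMod 2) :
    (perm g).SameCycle x (x.1 + 1, Fin.snoc (Fin.tail x.2) b) := by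
  obtain ⟨a, w⟩ := x
  have hpred : perm g (a, Fin.cons (b - g (a, Fin.tail w)) (Fin.tail w)) =
      (a + 1, Fin.snoc (Fin.tail w) b) := by
    simp [perm_apply, step]
  rw [← hpred, Perm.sameCycle_apply_right]
  conv_lhs => rw [← Fin.cons_self_tail w]
  exact sameCycle_cons H _ _ _ _

theorem sameCycle_window (x : ZMod s × (Fin (m + 1) → ZMod 2)) (z : ℕ → ZMod 2)
    (hz : ∀ i : Fin (m + 1), z i = x.2 i) (d : ℕ) :
    (perm g).SameCycle x (x.1 + d, fun i => z (i + d)) := by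
  induction d with
  | zero =>
    obtain ⟨a, w⟩ := x
    simpa [hz] using Perm.SameCycle.refl (perm g) (a, w)
  | succ d ih =>
    refine ih.trans ?_
    convert sameCycle_snoc H _ (z (m + 1 + d)) using 2
    · push_cast
      ring
    · funext i
      refine Fin.lastCases ?_ (fun i => ?_) i
      · simp only [Fin.snoc_last, Fin.val_last]
        congr 1
        omega
      · simp only [Fin.snoc_castSucc, Fin.tail, Fin.val_castSucc, Fin.val_succ]
        congr 1
        omega

theorem sameCycle_of_fst_eq (a : ZMod s) (w w' : Fin (m + 1) → ZMod 2) :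
    (perm g).SameCycle (a, w) (a, w') := by
  have hzero : ∀ w : Fin (m + 1) → ZMod 2,
      (perm g).SameCycle (a, w) (a + (m + 1 : ℕ), fun _ => 0) := by
    intro w
    convert sameCycle_window H (a, w) (fun i => if h : i < m + 1 then w ⟨i, h⟩ else 0)
      (fun i => by simp [i.isLt]) (m + 1) using 2
    funext i
    rw [dif_neg (by omega)]
  exact (hzero w).trans (hzero w').symm

theorem sameCycle_of_forall (x y : ZMod s × (Fin (m + 1) → ZMod 2)) :
    (perm g).SameCycle x y := by
  set k := (y.1 - x.1).val
  have hfst : ((perm g ^ k) x).1 = y.1 := by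
    rw [fst_perm_pow, ZMod.natCast_zmod_val, add_sub_cancel]
  refine (Perm.sameCycle_pow_right (n := k).mpr (Perm.SameCycle.refl _ x)).trans ?_
  rw [← Prod.mk.eta (p := (perm g ^ k) x), hfst]
  exact sameCycle_of_fst_eq H _ _ _

end Connected

theorem exists_forall_sameCycle :
    ∃ g : ZMod s × (Fin m → ZMod 2) → ZMod 2, ∀ x y, (perm g).SameCycle x y := by
  obtain ⟨g, -, hmin⟩ :=
    exists_min_image (univ : Finset (ZMod s × (Fin m → ZMod 2) → ZMod 2))
      (fun g => Nat.card (Quotient (Perm.SameCycle.setoid (perm g)))) univ_nonempty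
  refine ⟨g, sameCycle_of_forall fun a u => ?_⟩
  by_contra h
  have hlt := Perm.card_quotient_sameCycle_mul_swap_lt h
  rw [← perm_update g (a, u)] at hlt
  exact (hmin _ (mem_univ _)).not_gt hlt

end FeedbackShift

theorem exists_phased_deBruijn {s m N : ℕ} [NeZero s] (hm : m ≠ 0) (hN : N = s * 2 ^ m)
    (hsN : s ∣ N) : ∃ e : ZMod N → ZMod 2,
      Bijective fun j => (ZMod.castHom hsN (ZMod s) j, fun y : Fin m => e (j + (y : ℕ))) := by
  obtain ⟨m, rfl⟩ := Nat.exists_eq_succ_of_ne_zero hm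
  have : NeZero N := ⟨by simp [hN, NeZero.ne s]⟩
  obtain ⟨g, hg⟩ := FeedbackShift.exists_forall_sameCycle (s := s) (m := m)
  set σ := FeedbackShift.perm g
  have hmoved : ∀ x, σ x ≠ x := fun x hx => by
    have h := ((hg x (0, 0)).eq_of_left hx).symm.trans ((hg x (0, 1)).eq_of_left hx)
    simpa using congrFun (congrArg Prod.snd h) 0
  have hcycle : σ.IsCycle := ⟨(0, 0), hmoved _, fun y _ => hg _ y⟩
  have horder : orderOf σ = N := by
    rw [hcycle.orderOf, Finset.eq_univ_of_forall fun x => Perm.mem_support.mpr (hmoved x),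
      card_univ]
    simp [hN]
  have hpow : ∀ k : ℕ, σ ^ (k : ZMod N).val = σ ^ k := fun k => by
    rw [ZMod.val_natCast, ← horder, pow_mod_orderOf]
  let Φ : ZMod N → ZMod s × (Fin (m + 1) → ZMod 2) := fun j => (σ ^ j.val) (0, 0)
  have hΦ_add : ∀ j (k : ℕ), Φ (j + k) = (σ ^ k) (Φ j) := fun j k => by
    conv_lhs => rw [← ZMod.natCast_zmod_val j, ← Nat.cast_add]
    simp only [Φ, hpow, add_comm j.val, pow_add, Perm.mul_apply]
  refine ⟨fun j => (Φ j).2 0, ?_⟩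
  have hwindow : (fun j => (ZMod.castHom hsN (ZMod s) j,
      fun y : Fin (m + 1) => (Φ (j + (y : ℕ))).2 0)) = Φ := by
    funext j
    refine Prod.ext ?_ (funext fun y => ?_)
    · rw [ZMod.castHom_apply, ZMod.cast_eq_val, FeedbackShift.fst_perm_pow, zero_add]
    · show (Φ (j + (y : ℕ))).2 0 = _
      rw [hΦ_add, FeedbackShift.perm_pow_apply_snd_zero g y.isLt]
  rw [hwindow, Fintype.bijective_iff_surjective_and_card]
  refine ⟨fun y => ?_, by simp [hN]⟩
  obtain ⟨k, -, hk⟩ := (hg (0, 0) y).exists_pow_eq'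
  exact ⟨k, by simp only [Φ, hpow, hk]⟩

theorem IsDBAC.lift {r s N n m Δ : ℕ} {C : Fin Δ → ZMod r × ZMod s → ZMod 2}
    (hC : IsDBAC r s n m Δ C) {F : Fin Δ → ZMod r → ZMod s → ZMod 2}
    (hF : ∀ c i j, F c (i + 1) j = F c i j + C c (i, j)) (hsN : s ∣ N) {e : ZMod N → ZMod 2}
    (he : Bijective fun j => (ZMod.castHom hsN (ZMod s) j, fun y : Fin m => e (j + (y : ℕ)))) :
    IsDBAC r N (n + 1) m Δ fun c p => F c p.1 (ZMod.castHom hsN (ZMod s) p.2) + e p.2 := by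
  set π := ZMod.castHom hsN (ZMod s)
  intro M
  -- the rows of a window of the lifted array differ by a window of `C`; its top row pins `e`
  have hwindow : ∀ c i j,
      (∀ (x : Fin (n + 1)) (y : Fin m),
          F c (i + (x : ℕ)) (π (j + (y : ℕ))) + e (j + (y : ℕ)) = M x y) ↔
      (∀ (x : Fin n) (y : Fin m),
          C c (i + (x : ℕ), π j + (y : ℕ)) = M x.succ y - M x.castSucc y) ∧
        ∀ y : Fin m, e (j + (y : ℕ)) = M 0 y - F c i (π j + (y : ℕ)) := by
    intro c i j
    have hrow : ∀ (y : Fin m) (x : Fin n),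
        F c (i + (x.succ : ℕ)) (π (j + (y : ℕ))) + e (j + (y : ℕ)) -
          (F c (i + (x.castSucc : ℕ)) (π (j + (y : ℕ))) + e (j + (y : ℕ))) =
        C c (i + (x : ℕ), π j + (y : ℕ)) := by
      intro y x
      rw [Fin.val_succ, Nat.cast_succ, ← add_assoc, hF, Fin.val_castSucc, map_add, map_natCast]
      abel
    rw [forall_comm]
    simp only [Fin.forall_eq_iff_zero_and_sub, hrow]
    simp only [forall_and, Fin.val_zero, Nat.cast_zero, add_zero, map_add, map_natCast,
      eq_sub_iff_add_eq']
    rw [and_comm, forall_comm]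
  obtain ⟨⟨c, i, j₀⟩, hD, huniq⟩ := hC fun x y => M x.succ y - M x.castSucc y
  obtain ⟨j, hj⟩ := he.surjective (j₀, fun y => M 0 y - F c i (j₀ + (y : ℕ)))
  simp only [Prod.mk.injEq, funext_iff] at hj
  obtain ⟨rfl, hj⟩ := hj
  refine ⟨(c, i, j), (hwindow c i j).2 ⟨hD, hj⟩, ?_⟩
  rintro ⟨c', i', j'⟩ h
  obtain ⟨hD', he'⟩ := (hwindow c' i' j').1 h
  have hbase := huniq (c', i', π j') hD'
  simp only [Prod.mk.injEq] at hbase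
  obtain ⟨rfl, rfl, hπ⟩ := hbase
  have hj' : j' = j := he.injective (Prod.ext hπ (funext fun y => by simp only [he', hj, hπ]))
  rw [hj']

theorem stmt_13_general (k n t m Δ : ℕ) (hm : 2 ≤ m)
    (C : Fin Δ → (ZMod (2 ^ k) × ZMod (2 ^ t) → ZMod 2))
    (hC : IsDBAC (2 ^ k) (2 ^ t) n m Δ C)
    (heven : ∀ c, ∀ j : ZMod (2 ^ t), Even (colWeight (C c) j)) :
    ∃ C' : Fin Δ → (ZMod (2 ^ k) × ZMod (2 ^ (m + t)) → ZMod 2),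
      IsDBAC (2 ^ k) (2 ^ (m + t)) (n + 1) m Δ C' := by
  have hcol : ∀ c j, ∑ i, C c (i, j) = 0 := fun c j => by
    rw [sum_zmod_two_eq_ncard]
    exact ZMod.natCast_eq_zero_iff_even.mpr (heven c j)
  choose F hF using fun c j =>
    ZMod.exists_add_one_eq_add_of_sum_eq_zero (fun i => C c (i, j)) (hcol c j)
  have hdvd : 2 ^ t ∣ 2 ^ (m + t) := pow_dvd_pow 2 (Nat.le_add_left t m)
  obtain ⟨e, he⟩ := exists_phased_deBruijn (m := m) (by omega) (by rw [pow_add, mul_comm]) hdvd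
  exact ⟨_, hC.lift (F := fun c i j => F c j i) (fun c i j => hF c j i) hdvd he⟩

theorem stmt_13 (k n t m Δ : ℕ) (hk : 2 ≤ k) (hn : 2 ≤ n) (ht : 2 ≤ t) (hm : 2 ≤ m)
    (C : Fin Δ → (ZMod (2 ^ k) × ZMod (2 ^ t) → ZMod 2))
    (hC : IsDBAC (2 ^ k) (2 ^ t) n m Δ C)
    (heven : ∀ c, ∀ j : ZMod (2 ^ t), Even (colWeight (C c) j)) :
    ∃ C' : Fin Δ → (ZMod (2 ^ k) × ZMod (2 ^ (m + t)) → ZMod 2),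
      IsDBAC (2 ^ k) (2 ^ (m + t)) (n + 1) m Δ C' :=
  stmt_13_general k n t m Δ hm C hC heven
end

section
/- Let k, n, t, m be integers with 3 ≤ m < 2^t and 2 ≤ n < 2^k. Suppose there exists a (2^k, 2^t; n, m)-de Bruijn array code of size Δ in which every column of every codeword has odd weight, and suppose there exists a perfect factor PF(m, t), G : Fin 2^{m−t} → (ZMod 2^t → ZMod 2), such that for all indices a and b the complement of G(a) (the sequence i ↦ G(a)(i) + 1) is not a cyclic shift of G(b) (in particular no sequence of G is self-dual). Then there exists a (2^{k+1}, 2^t; n + 1, m)-de Bruijn array code of size 2^{m−1} · Δ. -/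
/-- A family `F` of `Δ` binary cyclic sequences of length `2^k` has the perfect-factor
window property for span `n`. -/
def IsPF (n k Δ : ℕ) (F : Fin Δ → (ZMod (2 ^ k) → ZMod 2)) : Prop :=
  ∀ x : Fin n → ZMod 2,
    ∃! p : Fin Δ × ZMod (2 ^ k),
      ∀ i : Fin n, F p.1 (p.2 + (i : ℕ)) = x i


namespace Stmt15Aux

lemma z2_two : (2 : ZMod 2) = 0 := by decide

lemma z2_add_eq_zero {a b : ZMod 2} (h : a + b = 0) : a = b := by revert a b h; decide

lemma z2_eq_add_add (a b : ZMod 2) : a = b + (a + b) := by revert a b; decide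

lemma z2_final {S D θ E M0 Mx : ZMod 2} (h1 : E + θ = M0 + S) (h2 : Mx = M0 + D) :
    S + D + θ + E = Mx := by revert S D θ E M0 Mx; decide

lemma z2_diff {T1 cv E a b : ZMod 2} (h2 : T1 + cv + E = a) (h1 : T1 + E = b) :
    cv = a + b := by revert T1 cv E a b; decide

lemma z2_rearr {S qc E M0 : ZMod 2} (h : S + qc + E = M0) : E + qc = M0 + S := by
  revert S qc E M0; decide




/-- mod-2 periodicity of binomial coefficients: period `2^t` for lower index `< 2^t`. -/
lemma choose_add_pow (t q a : ℕ) (hq : q < 2 ^ t) :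
    (((2 ^ t + a).choose q : ℕ) : ZMod 2) = ((a.choose q : ℕ) : ZMod 2) := by
  have hnat : (2 ^ t + a).choose q
      = ∑ z ∈ Finset.range (q + 1), (2 ^ t).choose z * a.choose (q - z) := by
    rw [Nat.add_choose_eq]
    exact Finset.Nat.sum_antidiagonal_eq_sum_range_succ
      (fun p r => (2 ^ t).choose p * a.choose r) q
  rw [hnat]
  push_cast
  rw [Finset.sum_eq_single 0]
  · simp
  · intro z hz hz0
    have h2 : (2 : ℕ) ∣ (2 ^ t).choose z := by
      refine Nat.Prime.dvd_choose_pow (by norm_num) hz0 ?_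
      have : z ≤ q := by simpa using Nat.lt_succ_iff.mp (Finset.mem_range.mp hz)
      omega
    have : (((2 ^ t).choose z : ℕ) : ZMod 2) = 0 := by
      rw [ZMod.natCast_eq_zero_iff]; exact h2
    rw [this, zero_mul]
  · intro h; simp at h

lemma choose_add_mul_pow (t q a d : ℕ) (hq : q < 2 ^ t) :
    (((a + d * 2 ^ t).choose q : ℕ) : ZMod 2) = ((a.choose q : ℕ) : ZMod 2) := by
  induction d with
  | zero => simp
  | succ d ih =>
      have : a + (d + 1) * 2 ^ t = 2 ^ t + (a + d * 2 ^ t) := by ring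
      rw [this, choose_add_pow t q _ hq, ih]

lemma choose_mod_pow (t q a : ℕ) (hq : q < 2 ^ t) :
    (((a % 2 ^ t).choose q : ℕ) : ZMod 2) = ((a.choose q : ℕ) : ZMod 2) := by
  conv_rhs => rw [← Nat.mod_add_div a (2 ^ t)]
  rw [mul_comm]
  exact (choose_add_mul_pow t q _ _ hq).symm

/-- The Pascal-type matrix `[C(j+y, i)]` has determinant 1 over `ZMod 2`. -/
lemma det_pascal (w j : ℕ) :
    (Matrix.of fun (y i : Fin w) => (((j + (y : ℕ)).choose (i : ℕ) : ℕ) : ZMod 2)).det = 1 := by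
  classical
  set A : Matrix (Fin w) (Fin w) (ZMod 2) :=
    Matrix.of fun (y a : Fin w) => (((y : ℕ).choose (a : ℕ) : ℕ) : ZMod 2) with hA
  set B : Matrix (Fin w) (Fin w) (ZMod 2) :=
    Matrix.of fun (a i : Fin w) =>
      if (a : ℕ) ≤ (i : ℕ) then ((j.choose ((i : ℕ) - (a : ℕ)) : ℕ) : ZMod 2) else 0 with hB
  have hfac : (Matrix.of fun (y i : Fin w) => (((j + (y : ℕ)).choose (i : ℕ) : ℕ) : ZMod 2))
      = A * B := by
    ext y i
    rw [Matrix.mul_apply]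
    have hnat : (j + (y : ℕ)).choose (i : ℕ)
        = ∑ z ∈ Finset.range ((i : ℕ) + 1), (y : ℕ).choose z * j.choose ((i : ℕ) - z) := by
      rw [add_comm j (y : ℕ), Nat.add_choose_eq]
      exact Finset.Nat.sum_antidiagonal_eq_sum_range_succ
        (fun p r => (y : ℕ).choose p * j.choose r) (i : ℕ)
    have hsub : Finset.range ((i : ℕ) + 1) ⊆ Finset.range w := by
      intro z hz; simp only [Finset.mem_range] at *; omega
    have : ∑ a : Fin w, A y a * B a i
        = ∑ a ∈ Finset.range w, (((y : ℕ).choose a : ℕ) : ZMod 2) *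
            (if a ≤ (i : ℕ) then ((j.choose ((i : ℕ) - a) : ℕ) : ZMod 2) else 0) := by
      rw [← Fin.sum_univ_eq_sum_range (fun a => (((y : ℕ).choose a : ℕ) : ZMod 2) *
        (if a ≤ (i : ℕ) then ((j.choose ((i : ℕ) - a) : ℕ) : ZMod 2) else 0)) w]
      rfl
    rw [this, ← Finset.sum_subset hsub]
    · simp only [Matrix.of_apply, hnat]
      push_cast
      refine Finset.sum_congr rfl ?_
      intro z hz
      have : z ≤ (i : ℕ) := by simpa using Nat.lt_succ_iff.mp (Finset.mem_range.mp hz)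
      rw [if_pos this]
    · intro z _ hz
      have : ¬ z ≤ (i : ℕ) := by simp only [Finset.mem_range] at hz; omega
      rw [if_neg this, mul_zero]
  have hAdet : A.det = 1 := by
    have : A.det = ∏ y : Fin w, A y y := by
      apply Matrix.det_of_lowerTriangular
      intro y a h
      have : (a : ℕ) > (y : ℕ) := h
      simp only [hA, Matrix.of_apply, Nat.choose_eq_zero_of_lt this, Nat.cast_zero]
    rw [this]
    simp [hA, Nat.choose_self]
  have hBdet : B.det = 1 := by
    have : B.det = ∏ a : Fin w, B a a := by
      apply Matrix.det_of_upperTriangular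
      intro a i h
      have : ¬ (a : ℕ) ≤ (i : ℕ) := by exact Nat.not_le.mpr h
      simp only [hB, Matrix.of_apply, if_neg this]
    rw [this]
    simp [hB, Nat.sub_self]
  rw [hfac, Matrix.det_mul, hAdet, hBdet, one_mul]







lemma core (w j : ℕ) (v : Fin w → ZMod 2) (δ : ZMod 2)
    (H : ∀ y : ℕ, y ≤ w →
      (∑ i : Fin w, v i * (((j + y).choose ((i : ℕ) + 1) : ℕ) : ZMod 2)) + δ = 0) :
    v = 0 ∧ δ = 0 := by
  classical
  haveI : Fact (Nat.Prime 2) := ⟨by norm_num⟩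
  have HP : ∀ y : ℕ, y < w →
      (∑ i : Fin w, v i * (((j + y).choose (i : ℕ) : ℕ) : ZMod 2)) = 0 := by
    intro y hy
    have h1 := H y (le_of_lt hy)
    have h2 := H (y + 1) (by omega)
    have hadd : (∑ i : Fin w, v i * (((j + (y + 1)).choose ((i : ℕ) + 1) : ℕ) : ZMod 2))
        + (∑ i : Fin w, v i * (((j + y).choose ((i : ℕ) + 1) : ℕ) : ZMod 2)) = 0 := by
      have h2' : (2 : ZMod 2) = 0 := z2_two
      linear_combination h2 + h1 - δ * h2'
    rw [← Finset.sum_add_distrib] at hadd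
    rw [← hadd]
    refine Finset.sum_congr rfl ?_
    intro i _
    have hP : (j + (y + 1)).choose ((i : ℕ) + 1)
        = (j + y).choose (i : ℕ) + (j + y).choose ((i : ℕ) + 1) := by
      have : j + (y + 1) = (j + y) + 1 := by omega
      rw [this]
      exact Nat.choose_succ_succ (j + y) (i : ℕ)
    rw [hP, Nat.cast_add]
    have h2' : (2 : ZMod 2) = 0 := z2_two
    linear_combination (-(v i * (((j + y).choose ((i : ℕ) + 1) : ℕ) : ZMod 2))) * h2'
  have hv : v = 0 := by
    by_contra hv
    have hmv : (Matrix.of fun (y i : Fin w) =>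
        (((j + (y : ℕ)).choose (i : ℕ) : ℕ) : ZMod 2)).mulVec v = 0 := by
      funext y
      have := HP (y : ℕ) y.isLt
      simpa [Matrix.mulVec, dotProduct, mul_comm] using this
    have hdet := (Matrix.exists_mulVec_eq_zero_iff.mp ⟨v, hv, hmv⟩)
    rw [det_pascal] at hdet
    exact one_ne_zero hdet
  refine ⟨hv, ?_⟩
  have h0 := H 0 (Nat.zero_le w)
  rw [hv] at h0
  simpa using h0

lemma key (m j : ℕ) (hm : 1 ≤ m) (τ : Fin m → ZMod 2) :
    ∃! vθ : (Fin (m - 1) → ZMod 2) × ZMod 2,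
      ∀ y : Fin m,
        (∑ i : Fin (m - 1), vθ.1 i * (((j + (y : ℕ)).choose ((i : ℕ) + 1) : ℕ) : ZMod 2))
          + vθ.2 = τ y := by
  classical
  set F : ((Fin (m - 1) → ZMod 2) × ZMod 2) → (Fin m → ZMod 2) := fun p y =>
    (∑ i : Fin (m - 1), p.1 i * (((j + (y : ℕ)).choose ((i : ℕ) + 1) : ℕ) : ZMod 2)) + p.2
    with hF
  have hinj : Function.Injective F := by
    intro p p' h
    have H : ∀ y : ℕ, y ≤ m - 1 →
        (∑ i : Fin (m - 1), (p.1 i + p'.1 i) *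
          (((j + y).choose ((i : ℕ) + 1) : ℕ) : ZMod 2)) + (p.2 + p'.2) = 0 := by
      intro y hy
      have hy' : y < m := by omega
      have := congrFun h ⟨y, hy'⟩
      simp only [hF] at this
      have h2' : (2 : ZMod 2) = 0 := z2_two
      have hsplit : ∀ i : Fin (m - 1), (p.1 i + p'.1 i) *
          (((j + y).choose ((i : ℕ) + 1) : ℕ) : ZMod 2)
          = p.1 i * (((j + y).choose ((i : ℕ) + 1) : ℕ) : ZMod 2)
            + p'.1 i * (((j + y).choose ((i : ℕ) + 1) : ℕ) : ZMod 2) := fun i => by ring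
    
      rw [Finset.sum_congr rfl (fun i _ => hsplit i), Finset.sum_add_distrib]
      linear_combination this + (∑ i : Fin (m - 1), p'.1 i *
        (((j + y).choose ((i : ℕ) + 1) : ℕ) : ZMod 2) + p'.2) * h2'
    obtain ⟨hv, hd⟩ := core (m - 1) j _ _ H
    have hp1 : p.1 = p'.1 := by
      funext i
      exact z2_add_eq_zero (congrFun hv i)
    have hp2 : p.2 = p'.2 := z2_add_eq_zero hd
    exact Prod.ext hp1 hp2
  have hcard : Fintype.card ((Fin (m - 1) → ZMod 2) × ZMod 2)
      = Fintype.card (Fin m → ZMod 2) := by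
    simp only [Fintype.card_prod, Fintype.card_fun, ZMod.card, Fintype.card_fin]
    rw [← pow_succ]
    congr 1
    omega
  have hbij : Function.Bijective F :=
    (Fintype.bijective_iff_injective_and_card F).mpr ⟨hinj, hcard⟩
  obtain ⟨p, hp, hup⟩ := hbij.existsUnique τ
  refine ⟨p, ?_, ?_⟩
  · intro y; exact congrFun hp y
  · intro p' hp'
    exact hup p' (funext hp')





lemma z2_cast_odd {c : ℕ} (h : Odd c) : ((c : ℕ) : ZMod 2) = 1 := by
  obtain ⟨q, rfl⟩ := h
  push_cast
  have h2 : (2 : ZMod 2) = 0 := by decide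
  rw [h2]
  ring

/-- sum over a range of length `r` of a `ZMod r`-periodic function equals sum over `ZMod r`. -/
lemma sum_range_cast {r : ℕ} [NeZero r] (g : ZMod r → ZMod 2) :
    ∑ u ∈ Finset.range r, g (u : ZMod r) = ∑ z : ZMod r, g z := by
  classical
  refine Finset.sum_nbij' (fun u => (u : ZMod r)) (fun z => z.val) ?_ ?_ ?_ ?_ ?_
  · intro u _; exact Finset.mem_univ _
  · intro z _; exact Finset.mem_range.mpr (ZMod.val_lt z)
  · intro u hu; exact ZMod.val_cast_of_lt (Finset.mem_range.mp hu)
  · intro z _; exact ZMod.natCast_rightInverse z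
  · intro u _; rfl

lemma odd_col_sum {r : ℕ} [NeZero r] (f : ZMod r → ZMod 2)
    (h : Odd {i : ZMod r | f i = 1}.ncard) : ∑ z : ZMod r, f z = 1 := by
  classical
  have hval : ∀ a : ZMod 2, a = if a = 1 then 1 else 0 := by decide
  have : ∑ z : ZMod r, f z = ∑ z : ZMod r, if f z = 1 then (1 : ZMod 2) else 0 :=
    Finset.sum_congr rfl fun z _ => hval (f z)
  rw [this, Finset.sum_boole]
  have hcard : {i : ZMod r | f i = 1}.ncard
      = (Finset.filter (fun z => f z = 1) Finset.univ).card := by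
    rw [Set.ncard_eq_toFinset_card', Set.toFinset_setOf]
  rw [hcard] at h
  exact z2_cast_odd h

/-- partial sums of a periodic column. -/
def colsum {r : ℕ} (f : ZMod r → ZMod 2) (a : ℕ) : ZMod 2 :=
  ∑ x ∈ Finset.range a, f (x : ZMod r)

lemma colsum_succ {r : ℕ} (f : ZMod r → ZMod 2) (a : ℕ) :
    colsum f (a + 1) = colsum f a + f (a : ZMod r) :=
  Finset.sum_range_succ _ a

lemma colsum_add {r : ℕ} (f : ZMod r → ZMod 2) (a d : ℕ) :
    colsum f (a + d) = colsum f a + ∑ u ∈ Finset.range d, f ((a + u : ℕ) : ZMod r) := by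
  induction d with
  | zero => simp
  | succ d ih =>
      rw [← add_assoc, colsum_succ, ih, Finset.sum_range_succ, ← add_assoc]

lemma colsum_period {r : ℕ} [NeZero r] (f : ZMod r → ZMod 2)
    (h1 : ∑ z : ZMod r, f z = 1) (a : ℕ) :
    colsum f (a + r) = colsum f a + 1 := by
  rw [colsum_add]
  congr 1
  have : ∀ u : ℕ, ((a + u : ℕ) : ZMod r) = (a : ZMod r) + (u : ZMod r) := by
    intro u; push_cast; ring
  rw [Finset.sum_congr rfl fun u _ => congrArg f (this u)]
  rw [sum_range_cast (fun z => f ((a : ZMod r) + z))]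
  have he : ∑ z : ZMod r, f ((a : ZMod r) + z) = ∑ z : ZMod r, f z :=
    Fintype.sum_equiv (Equiv.addLeft (a : ZMod r)) _ f (fun z => rfl)
  rw [he]
  exact h1

lemma colsum_mul_period {r : ℕ} [NeZero r] (f : ZMod r → ZMod 2)
    (h1 : ∑ z : ZMod r, f z = 1) (a q : ℕ) :
    colsum f (a + r * q) = colsum f a + (q : ZMod 2) := by
  induction q with
  | zero => simp
  | succ q ih =>
      have : a + r * (q + 1) = (a + r * q) + r := by ring
      rw [this, colsum_period f h1, ih]
      push_cast
      ring

lemma colsum_mod {r : ℕ} [NeZero r] (f : ZMod r → ZMod 2)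
    (h1 : ∑ z : ZMod r, f z = 1) (a : ℕ) :
    colsum f (a % (r + r)) = colsum f a := by
  conv_rhs => rw [← Nat.mod_add_div a (r + r)]
  have : a % (r + r) + (r + r) * (a / (r + r)) = a % (r + r) + r * (2 * (a / (r + r))) := by
    ring
  rw [this, colsum_mul_period f h1]
  push_cast
  have h2 : (2 : ZMod 2) = 0 := by decide
  rw [h2]
  ring

lemma val_add_nat {N : ℕ} [NeZero N] (a : ZMod N) (x : ℕ) :
    (a + (x : ZMod N)).val = (a.val + x) % N := by
  rw [ZMod.val_add, ZMod.val_natCast, Nat.add_mod_mod]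



end Stmt15Aux

set_option maxHeartbeats 1000000 in
set_option synthInstance.maxHeartbeats 400000 in
open Stmt15Aux in
private lemma stmt15_main (k n t m Δ : ℕ) (hm : 3 ≤ m) (hmt : m < 2 ^ t) (hn : 2 ≤ n) (hnk : n < 2 ^ k)
    (C : Fin Δ → (ZMod (2 ^ k) × ZMod (2 ^ t) → ZMod 2))
    (hC : ∀ M : Fin n → Fin m → ZMod 2,
      ∃! p : Fin Δ × ZMod (2 ^ k) × ZMod (2 ^ t),
        ∀ (x : Fin n) (y : Fin m), C p.1 (p.2.1 + (x : ℕ), p.2.2 + (y : ℕ)) = M x y)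
    (hodd : ∀ c, ∀ j : ZMod (2 ^ t), Odd {i : ZMod (2 ^ k) | C c (i, j) = 1}.ncard) :
    ∃ C' : Fin (2 ^ (m - 1) * Δ) → (ZMod (2 ^ (k + 1)) × ZMod (2 ^ t) → ZMod 2),
      ∀ M : Fin (n + 1) → Fin m → ZMod 2,
        ∃! p : Fin (2 ^ (m - 1) * Δ) × ZMod (2 ^ (k + 1)) × ZMod (2 ^ t),
          ∀ (x : Fin (n + 1)) (y : Fin m),
            C' p.1 (p.2.1 + (x : ℕ), p.2.2 + (y : ℕ)) = M x y := by
  classical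
  haveI : NeZero (2 ^ k) := ⟨by positivity⟩
  haveI : NeZero (2 ^ (k + 1)) := ⟨by positivity⟩
  haveI : NeZero (2 ^ t) := ⟨by positivity⟩
  have hRR : 2 ^ (k + 1) = 2 ^ k + 2 ^ k := by rw [pow_succ, mul_two]
  obtain ⟨e⟩ : Nonempty (Fin (2 ^ (m - 1) * Δ) ≃ ((Fin (m - 1) → ZMod 2) × Fin Δ)) := by
    refine ⟨(Fintype.equivOfCardEq ?_).symm⟩
    simp [Fintype.card_fun, ZMod.card]
  set col : Fin Δ → ZMod (2 ^ t) → ZMod (2 ^ k) → ZMod 2 :=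
    fun c j z => C c (z, j) with hcol
  have hsum1 : ∀ c j, ∑ z : ZMod (2 ^ k), col c j z = 1 :=
    fun c j => odd_col_sum _ (hodd c j)
  set T : Fin Δ → ZMod (2 ^ t) → ℕ → ZMod 2 :=
    fun c j a => colsum (col c j) a with hT
  set eps : (Fin (m - 1) → ZMod 2) → ZMod (2 ^ t) → ZMod 2 := fun v j =>
    ∑ i : Fin (m - 1), v i * ((j.val.choose ((i : ℕ) + 1) : ℕ) : ZMod 2) with heps
  have heps2 : ∀ (v : Fin (m - 1) → ZMod 2) (j : ZMod (2 ^ t)) (y : ℕ),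
      eps v (j + (y : ZMod (2 ^ t)))
        = ∑ i : Fin (m - 1), v i * (((j.val + y).choose ((i : ℕ) + 1) : ℕ) : ZMod 2) := by
    intro v j y
    simp only [heps]
    refine Finset.sum_congr rfl fun i _ => ?_
    congr 1
    rw [val_add_nat]
    exact choose_mod_pow t ((i : ℕ) + 1) (j.val + y) (by have := i.isLt; omega)
  have hTmod : ∀ (c0 : Fin Δ) (j0 : ZMod (2 ^ t)) (I0 : ZMod (2 ^ (k + 1))) (x : ℕ),
      T c0 j0 ((I0 + (x : ZMod (2 ^ (k + 1)))).val) = T c0 j0 (I0.val + x) := by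
    intro c0 j0 I0 x
    rw [val_add_nat]
    have hmodeq : (I0.val + x) % 2 ^ (k + 1) = (I0.val + x) % (2 ^ k + 2 ^ k) :=
      congrArg (fun z => (I0.val + x) % z) hRR
    rw [hmodeq]
    simp only [hT]
    exact colsum_mod _ (hsum1 c0 j0) _
  refine ⟨fun q p => T (e q).2 p.2 p.1.val + eps (e q).1 p.2, ?_⟩
  intro M
  set DM : Fin n → Fin m → ZMod 2 := fun x y => M x.succ y + M x.castSucc y with hDM
  obtain ⟨⟨c, i, j⟩, hw, hu⟩ := hC DM
  replace hw : ∀ (x : Fin n) (y : Fin m), C c (i + (x : ℕ), j + (y : ℕ)) = DM x y := hw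
  replace hu : ∀ p' : Fin Δ × ZMod (2 ^ k) × ZMod (2 ^ t),
      (∀ (x : Fin n) (y : Fin m), C p'.1 (p'.2.1 + (x : ℕ), p'.2.2 + (y : ℕ)) = DM x y) →
      p' = (c, i, j) := hu
  -- telescoping of M along columns
  have hM : ∀ (x' : ℕ) (hx : x' < n + 1) (y : Fin m),
      M ⟨x', hx⟩ y = M 0 y +
        ∑ u ∈ Finset.range x', (if h : u < n then DM ⟨u, h⟩ y else 0) := by
    intro x'
    induction x' with
    | zero =>
        intro hx y
        have h0 : (⟨0, hx⟩ : Fin (n + 1)) = 0 := rfl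
        simp [h0]
    | succ x ih =>
        intro hx y
        have hxn : x < n := by omega
        have hx' : x < n + 1 := by omega
        have hstep : M ⟨x + 1, hx⟩ y = M ⟨x, hx'⟩ y + DM ⟨x, hxn⟩ y := by
          simp only [hDM]
          exact z2_eq_add_add _ _
        rw [Finset.sum_range_succ, dif_pos hxn, ← add_assoc, ← ih hx' y, hstep]
  -- solve for the offset and the vertical-shift bit
  obtain ⟨⟨v, θ⟩, hvθ, huvθ⟩ :=
    key m j.val (by omega)
      (fun y => M 0 y + T c (j + ((y : ℕ) : ZMod (2 ^ t))) i.val)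
  set c' : Fin (2 ^ (m - 1) * Δ) := e.symm (v, c) with hc'
  set I : ZMod (2 ^ (k + 1)) := ((i.val + 2 ^ k * θ.val : ℕ) : ZMod (2 ^ (k + 1))) with hI
  have hIval : I.val = i.val + 2 ^ k * θ.val := by
    apply ZMod.val_cast_of_lt
    have h1 : i.val < 2 ^ k := ZMod.val_lt i
    have h2 : θ.val < 2 := ZMod.val_lt θ
    have : 2 ^ k * θ.val ≤ 2 ^ k * 1 := by
      apply Nat.mul_le_mul_left; omega
    omega
  refine ⟨⟨c', I, j⟩, ?_, ?_⟩
  · -- existence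
    intro x y
    simp only
    rw [hTmod, heps2]
    simp only [hc', Equiv.apply_symm_apply]
    have harg : I.val + (x : ℕ) = (i.val + (x : ℕ)) + 2 ^ k * θ.val := by
      rw [hIval]; ring
    rw [harg]
    simp only [hT]
    rw [colsum_mul_period _ (hsum1 c _) _ θ.val, colsum_add]
    have hterm : ∀ u ∈ Finset.range (x : ℕ),
        col c (j + ((y : ℕ) : ZMod (2 ^ t))) (((i.val + u : ℕ) : ZMod (2 ^ k)))
          = (if h : u < n then DM ⟨u, h⟩ y else 0) := by
      intro u hu
      have hun : u < n := by
        have := Finset.mem_range.mp hu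
        have := x.isLt
        omega
      rw [dif_pos hun]
      have hcast : (((i.val + u : ℕ)) : ZMod (2 ^ k)) = i + ((u : ℕ) : ZMod (2 ^ k)) := by
        push_cast
        rw [ZMod.natCast_rightInverse i]
      simp only [hcol, hcast]
      exact hw ⟨u, hun⟩ y
    rw [Finset.sum_congr rfl hterm]
    have hMx : M x y = M 0 y +
        ∑ u ∈ Finset.range (x : ℕ), (if h : u < n then DM ⟨u, h⟩ y else 0) := by
      have := hM (x : ℕ) x.isLt y
      simpa [Fin.eta] using this
    have hkey := hvθ y
    have hθ : ((θ.val : ℕ) : ZMod 2) = θ := ZMod.natCast_rightInverse θ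
    rw [hθ]
    refine z2_final (E := ∑ i_1 : Fin (m - 1),
      v i_1 * (((j.val + (y : ℕ)).choose ((i_1 : ℕ) + 1) : ℕ) : ZMod 2)) ?_ hMx
    exact hkey
  · -- uniqueness
    rintro ⟨c'', I', J'⟩ hp'
    simp only at hp'
    set vc := e c'' with hvc
    -- derivative windows of the candidate
    have hD : ∀ (x : Fin n) (y : Fin m),
        C vc.2 (((I'.val : ℕ) : ZMod (2 ^ k)) + (x : ℕ), J' + (y : ℕ)) = DM x y := by
      intro x y
      have e1 := hp' x.castSucc y
      have e2 := hp' x.succ y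
      rw [hTmod] at e1 e2
      have hc1 : ((x.castSucc : ℕ) : ZMod (2 ^ (k + 1))) = ((x : ℕ) : ZMod (2 ^ (k + 1))) := by
        norm_cast
      have hc2 : I'.val + (x.succ : ℕ) = (I'.val + (x : ℕ)) + 1 := by
        rw [Fin.val_succ]; ring
      rw [hc2] at e2
      simp only [Fin.coe_castSucc] at e1
      simp only [hT, colsum_succ] at e1 e2
      have := z2_diff e2 e1
      simp only [hDM] at this ⊢
      simp only [hcol] at this
      have hcast : (((I'.val + (x : ℕ) : ℕ)) : ZMod (2 ^ k))
          = ((I'.val : ℕ) : ZMod (2 ^ k)) + ((x : ℕ) : ZMod (2 ^ k)) := by push_cast; ring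
      rw [hcast] at this
      exact this
    have happly := hu (vc.2, ((I'.val : ℕ) : ZMod (2 ^ k)), J') hD
    rw [Prod.ext_iff] at happly
    obtain ⟨hcc, hrest⟩ := happly
    rw [Prod.ext_iff] at hrest
    obtain ⟨hii, hjj⟩ := hrest
    simp only at hcc hii hjj
    -- decompose I'.val
    have hiv : I'.val % 2 ^ k = i.val := by
      rw [← hii, ZMod.val_natCast]
    have hsplitI : I'.val = i.val + 2 ^ k * (I'.val / 2 ^ k) := by
      conv_lhs => rw [← Nat.mod_add_div I'.val (2 ^ k)]
      rw [hiv]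
    have hqlt : I'.val / 2 ^ k < 2 := by
      by_contra hq
      have h2q : 2 ^ k * 2 ≤ 2 ^ k * (I'.val / 2 ^ k) := by
        apply Nat.mul_le_mul_left; omega
      have := ZMod.val_lt I'
      omega
    -- top row
    have htop : ∀ y : Fin m,
        (∑ i_1 : Fin (m - 1),
          vc.1 i_1 * (((j.val + (y : ℕ)).choose ((i_1 : ℕ) + 1) : ℕ) : ZMod 2))
          + ((I'.val / 2 ^ k : ℕ) : ZMod 2)
          = M 0 y + T c (j + ((y : ℕ) : ZMod (2 ^ t))) i.val := by
      intro y
      have e0 := hp' 0 y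
      have h00 : ((0 : Fin (n + 1)) : ℕ) = 0 := rfl
      rw [h00] at e0
      have hI'0 : I' + ((0 : ℕ) : ZMod (2 ^ (k + 1))) = I' + ((0 : ℕ) : ZMod (2 ^ (k + 1))) := rfl
      rw [hTmod] at e0
      rw [hjj] at e0
      rw [heps2] at e0
      have harg : I'.val + 0 = i.val + 2 ^ k * (I'.val / 2 ^ k) := by omega
      rw [harg] at e0
      simp only [hT] at e0 ⊢
      rw [hcc] at e0
      rw [colsum_mul_period _ (hsum1 c _) _ _] at e0
      exact z2_rearr e0
    have huv := huvθ (vc.1, ((I'.val / 2 ^ k : ℕ) : ZMod 2)) htop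
    rw [Prod.ext_iff] at huv
    obtain ⟨hv1, hv2⟩ := huv
    simp only at hv1 hv2
    -- assemble
    have hcfin : c'' = c' := by
      rw [hc']
      have : vc = (v, c) := Prod.ext hv1 hcc
      rw [← this, hvc, Equiv.symm_apply_apply]
    have hIfin : I' = I := by
      have hqv : (((I'.val / 2 ^ k : ℕ) : ZMod 2)).val = I'.val / 2 ^ k :=
        ZMod.val_cast_of_lt hqlt
      have : I'.val = I.val := by
        rw [hIval, hsplitI, ← hv2, hqv]
      calc I' = ((I'.val : ℕ) : ZMod (2 ^ (k + 1))) := (ZMod.natCast_rightInverse I').symm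
        _ = ((I.val : ℕ) : ZMod (2 ^ (k + 1))) := by rw [this]
        _ = I := ZMod.natCast_rightInverse I
    rw [hcfin, hIfin, hjj]

theorem stmt_15 (k n t m Δ : ℕ) (hm : 3 ≤ m) (hmt : m < 2 ^ t) (hn : 2 ≤ n) (hnk : n < 2 ^ k)
    (C : Fin Δ → (ZMod (2 ^ k) × ZMod (2 ^ t) → ZMod 2))
    (hC : IsDBAC (2 ^ k) (2 ^ t) n m Δ C)
    (hodd : ∀ c, ∀ j : ZMod (2 ^ t), Odd (colWeight (C c) j))
    (G : Fin (2 ^ (m - t)) → (ZMod (2 ^ t) → ZMod 2))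
    (hG : IsPF m t (2 ^ (m - t)) G)
    (hGc : ∀ a b, ¬ ∃ j : ZMod (2 ^ t), ∀ i : ZMod (2 ^ t), G a i + 1 = G b (i + j)) :
    ∃ C' : Fin (2 ^ (m - 1) * Δ) → (ZMod (2 ^ (k + 1)) × ZMod (2 ^ t) → ZMod 2),
      IsDBAC (2 ^ (k + 1)) (2 ^ t) (n + 1) m (2 ^ (m - 1) * Δ) C' := by
  obtain ⟨C', hC'⟩ := stmt15_main k n t m Δ hm hmt hn hnk C hC hodd
  exact ⟨C', hC'⟩
end
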